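/- arXiv:2206.10982 — 5 statements merged into one kernel-verified Lean document; each statement's English description precedes it below -/
import Mathlib

section
/- Let (L^c_1, …, L^c_n, L_1, …, L_m) be an exchangeable family of real-valued random variables with almost surely no ties, where n, m ≥ 1. Let L^c_{(1)} ≤ … ≤ L^c_{(n)} be the order statistics of the first n variables and L_{(1)} ≤ … ≤ L_{(m)} those of the last m variables. Then for every 1 ≤ i ≤ m and 1 ≤ j ≤ n, Pr[L^c_{(j)} ≤ L_{(i)} < L^c_{(j+1)}] = C(n−j+m−i, n−j) · C(j+i−1, j) / C(n+m, m), where for j = n the event is interpreted as {L^c_{(n)} ≤ L_{(i)}}. -/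
open MeasureTheory

/-- The `i`-th order statistic (0-indexed) of the finite tuple `f : Fin N → ℝ`, i.e. the
`(i+1)`-th smallest value among `f 0, …, f (N-1)`. -/
noncomputable def orderStat {N : ℕ} (f : Fin N → ℝ) (i : Fin N) : ℝ := f (Tuple.sort f i)

open Finset

lemma orderStat_le_iff {M : ℕ} (g : Fin M → ℝ) (r : Fin M) (x : ℝ) :
    orderStat g r ≤ x ↔ r.val + 1 ≤ (univ.filter fun b => g b ≤ x).card := by
  constructor
  · intro h
    have hsub : (Finset.Iic r).image (Tuple.sort g) ⊆ univ.filter fun b => g b ≤ x := by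
      intro b hb
      simp only [mem_image, Finset.mem_Iic] at hb
      obtain ⟨r', hr', rfl⟩ := hb
      simp only [mem_filter, mem_univ, true_and]
      exact le_trans (Tuple.monotone_sort g hr') h
    calc r.val + 1 = (Finset.Iic r).card := (Fin.card_Iic r).symm
      _ = ((Finset.Iic r).image (Tuple.sort g)).card :=
          (Finset.card_image_of_injective _ (Tuple.sort g).injective).symm
      _ ≤ _ := Finset.card_le_card hsub
  · intro h
    by_contra hc
    push_neg at hc
    have hsub : (univ.filter fun b => g b ≤ x) ⊆ (Finset.Iio r).image (Tuple.sort g) := by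
      intro b hb
      simp only [mem_filter, mem_univ, true_and] at hb
      obtain ⟨r', rfl⟩ := (Tuple.sort g).surjective b
      simp only [mem_image, Finset.mem_Iio]
      refine ⟨r', ?_, rfl⟩
      by_contra hr
      push_neg at hr
      exact absurd (le_trans (Tuple.monotone_sort g hr) hb) (not_le.mpr hc)
    have := Finset.card_le_card hsub
    rw [Finset.card_image_of_injective _ (Tuple.sort g).injective, Fin.card_Iio] at this
    omega

lemma card_lt_orderStat {M : ℕ} {g : Fin M → ℝ} (hg : Function.Injective g) (r : Fin M) :
    (univ.filter fun b => g b < orderStat g r).card = r.val := by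
  have heq : (univ.filter fun b => g b < orderStat g r) = (Finset.Iio r).image (Tuple.sort g) := by
    ext b
    simp only [mem_filter, mem_univ, true_and, mem_image, Finset.mem_Iio]
    constructor
    · intro hb
      obtain ⟨r', rfl⟩ := (Tuple.sort g).surjective b
      refine ⟨r', ?_, rfl⟩
      by_contra hr
      push_neg at hr
      exact absurd (Tuple.monotone_sort g hr) (not_le.mpr hb)
    · rintro ⟨r', hr', rfl⟩
      refine lt_of_le_of_ne (Tuple.monotone_sort g hr'.le) ?_
      intro he
      exact absurd ((Tuple.sort g).injective (hg he)) (ne_of_lt hr')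
  rw [heq, Finset.card_image_of_injective _ (Tuple.sort g).injective, Fin.card_Iio]

lemma event_iff_card {n m : ℕ} (i j : ℕ) (hi1 : 1 ≤ i) (him : i ≤ m) (hj1 : 1 ≤ j) (hjn : j ≤ n)
    {f : Fin (n + m) → ℝ} (hf : Function.Injective f) :
    ((orderStat (fun a : Fin n => f (Fin.castAdd m a)) ⟨j - 1, Nat.lt_of_lt_of_le (Nat.sub_lt hj1 Nat.one_pos) hjn⟩
          ≤ orderStat (fun b : Fin m => f (Fin.natAdd n b)) ⟨i - 1, Nat.lt_of_lt_of_le (Nat.sub_lt hi1 Nat.one_pos) him⟩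
        ∧ ∀ h : j < n,
            orderStat (fun b : Fin m => f (Fin.natAdd n b)) ⟨i - 1, Nat.lt_of_lt_of_le (Nat.sub_lt hi1 Nat.one_pos) him⟩
              < orderStat (fun a : Fin n => f (Fin.castAdd m a)) ⟨j, h⟩))
      ↔ (univ.filter fun a : Fin n =>
          f (Fin.castAdd m a) < orderStat (fun b : Fin m => f (Fin.natAdd n b)) ⟨i - 1, Nat.lt_of_lt_of_le (Nat.sub_lt hi1 Nat.one_pos) him⟩).card = j := by
  set fc : Fin n → ℝ := fun a => f (Fin.castAdd m a) with hfc
  set fn : Fin m → ℝ := fun b => f (Fin.natAdd n b) with hfn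
  set v : ℝ := orderStat fn ⟨i - 1, by omega⟩ with hv
  have hne : ∀ a : Fin n, fc a ≠ v := by
    intro a he
    have : Fin.castAdd m a = Fin.natAdd n (Tuple.sort fn ⟨i - 1, by omega⟩) := hf he
    have := congrArg Fin.val this
    rw [Fin.coe_castAdd, Fin.coe_natAdd] at this
    omega
  have hsets : (univ.filter fun a : Fin n => fc a ≤ v) = (univ.filter fun a => fc a < v) := by
    apply Finset.filter_congr
    intro a _
    exact ⟨fun h => lt_of_le_of_ne h (hne a), le_of_lt⟩
  set c := (univ.filter fun a : Fin n => fc a < v).card with hc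
  have h1 : orderStat fc ⟨j - 1, by omega⟩ ≤ v ↔ j ≤ c := by
    rw [orderStat_le_iff, hsets]
    have : (⟨j - 1, by omega⟩ : Fin n).val + 1 = j := by
      show j - 1 + 1 = j
      omega
    rw [this]
  constructor
  · rintro ⟨ha, hb⟩
    have hj' : j ≤ c := h1.mp ha
    rcases lt_or_eq_of_le hjn with h | h
    · have := hb h
      have h2 : ¬ (orderStat fc ⟨j, h⟩ ≤ v) := not_le.mpr this
      rw [orderStat_le_iff, hsets] at h2
      push_neg at h2
      simp only at h2
      omega
    · have : c ≤ n := by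
        simpa using Finset.card_filter_le univ (fun a : Fin n => fc a < v)
      omega
  · intro hcj
    refine ⟨h1.mpr (le_of_eq hcj.symm), fun h => ?_⟩
    have h2 : ¬ (orderStat fc ⟨j, h⟩ ≤ v) := by
      rw [orderStat_le_iff, hsets]
      push_neg
      simp only
      omega
    exact not_le.mp h2

lemma card_eq_iff_pred {n m : ℕ} (i j : ℕ) (hi1 : 1 ≤ i) (him : i ≤ m) (hj1 : 1 ≤ j) (hjn : j ≤ n)
    {f : Fin (n + m) → ℝ} (hf : Function.Injective f) {τ : Equiv.Perm (Fin (n + m))}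
    (hτ : StrictMono (f ∘ τ)) :
    (univ.filter fun a : Fin n =>
        f (Fin.castAdd m a) < orderStat (fun b : Fin m => f (Fin.natAdd n b)) ⟨i - 1, Nat.lt_of_lt_of_le (Nat.sub_lt hi1 Nat.one_pos) him⟩).card = j
      ↔ (n ≤ (τ ⟨i + j - 1, by omega⟩).val ∧
          ((Finset.Iio (⟨i + j - 1, by omega⟩ : Fin (n + m))).filter
              fun p => n ≤ (τ p).val).card = i - 1) := by
  set fn : Fin m → ℝ := fun b => f (Fin.natAdd n b) with hfn
  have hfninj : Function.Injective fn := fun b b' h => by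
    have := congrArg Fin.val (hf h)
    rw [Fin.coe_natAdd, Fin.coe_natAdd] at this
    exact Fin.ext (by omega)
  set b₀ : Fin m := Tuple.sort fn ⟨i - 1, by omega⟩ with hb₀
  set v : ℝ := orderStat fn ⟨i - 1, by omega⟩ with hv
  have hvb : v = f (Fin.natAdd n b₀) := rfl
  set k : Fin (n + m) := τ.symm (Fin.natAdd n b₀) with hk
  have hτk : τ k = Fin.natAdd n b₀ := τ.apply_symm_apply _
  have hlt : ∀ p : Fin (n + m), f (τ p) < v ↔ p < k := by
    intro p
    rw [hvb, ← hτk]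
    exact hτ.lt_iff_lt
  -- split card of Iio k
  have hsplit : ((Finset.Iio k).filter fun p => ¬ n ≤ (τ p).val).card
      + ((Finset.Iio k).filter fun p => n ≤ (τ p).val).card = k.val := by
    rw [← Fin.card_Iio k]
    rw [← Finset.card_filter_add_card_filter_not (s := Finset.Iio k)
      (fun p => n ≤ (τ p).val)]
    omega
  set jA : Fin (n + m) → Fin n := fun p => ⟨min (τ p).val (n - 1), by omega⟩ with hjA
  have hjAval : ∀ p : Fin (n + m), (τ p).val < n → Fin.castAdd m (jA p) = τ p := by
    intro p hp
    apply Fin.ext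
    simp only [hjA, Fin.coe_castAdd]
    omega
  set jB : Fin (n + m) → Fin m := fun p => ⟨min ((τ p).val - n) (m - 1), by omega⟩ with hjB
  have hjBval : ∀ p : Fin (n + m), n ≤ (τ p).val → Fin.natAdd n (jB p) = τ p := by
    intro p hp
    apply Fin.ext
    have := (τ p).isLt
    simp only [hjB, Fin.coe_natAdd]
    omega
  have hcA : (univ.filter fun a : Fin n => f (Fin.castAdd m a) < v).card
      = ((Finset.Iio k).filter fun p => ¬ n ≤ (τ p).val).card := by
    apply Finset.card_nbij' (fun a => τ.symm (Fin.castAdd m a)) jA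
    · intro a ha
      beta_reduce
      rw [Finset.mem_coe, Finset.mem_filter, Finset.mem_Iio]
      constructor
      · rw [← hlt, τ.apply_symm_apply]
        exact (Finset.mem_filter.mp ha).2
      · rw [τ.apply_symm_apply, Fin.coe_castAdd]
        omega
    · intro p hp
      have hp' := Finset.mem_filter.mp hp
      refine Finset.mem_filter.mpr ⟨Finset.mem_univ _, ?_⟩
      rw [hjAval p (by omega), hlt]
      exact Finset.mem_Iio.mp hp'.1
    · intro a ha
      apply Fin.ext
      have := a.isLt
      simp only [hjA, τ.apply_symm_apply, Fin.coe_castAdd]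
      omega
    · intro p hp
      have hp' := Finset.mem_filter.mp hp
      beta_reduce
      rw [hjAval p (by omega), τ.symm_apply_apply]
  have hcB : (univ.filter fun b : Fin m => fn b < v).card
      = ((Finset.Iio k).filter fun p => n ≤ (τ p).val).card := by
    apply Finset.card_nbij' (fun b => τ.symm (Fin.natAdd n b)) jB
    · intro b hb
      beta_reduce
      rw [Finset.mem_coe, Finset.mem_filter, Finset.mem_Iio]
      constructor
      · rw [← hlt, τ.apply_symm_apply]
        exact (Finset.mem_filter.mp hb).2
      · rw [τ.apply_symm_apply, Fin.coe_natAdd]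
        omega
    · intro p hp
      have hp' := Finset.mem_filter.mp hp
      refine Finset.mem_filter.mpr ⟨Finset.mem_univ _, ?_⟩
      show f (Fin.natAdd n (jB p)) < v
      rw [hjBval p hp'.2, hlt]
      exact Finset.mem_Iio.mp hp'.1
    · intro b hb
      apply Fin.ext
      have := b.isLt
      simp only [hjB, τ.apply_symm_apply, Fin.coe_natAdd]
      omega
    · intro p hp
      have hp' := Finset.mem_filter.mp hp
      beta_reduce
      rw [hjBval p hp'.2, τ.symm_apply_apply]
  have hcBval : ((Finset.Iio k).filter fun p => n ≤ (τ p).val).card = i - 1 := by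
    rw [← hcB]
    have := card_lt_orderStat hfninj (⟨i - 1, by omega⟩ : Fin m)
    simpa using this
  have hkval : k.val = (univ.filter fun a : Fin n => f (Fin.castAdd m a) < v).card + (i - 1) := by
    omega
  set k₀ : Fin (n + m) := (⟨i + j - 1, by omega⟩ : Fin (n + m)) with hk₀
  have hrankmono : ∀ (q q₀ : Fin (n + m)), n ≤ (τ q).val → q < q₀ →
      ((Finset.Iio q).filter fun p => n ≤ (τ p).val).card
        < ((Finset.Iio q₀).filter fun p => n ≤ (τ p).val).card := by
    intro q q₀ hq hlt'
    have hnm : q ∉ (Finset.Iio q).filter fun p => n ≤ (τ p).val := by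
      simp [Finset.mem_filter]
    have hsub : insert q ((Finset.Iio q).filter fun p => n ≤ (τ p).val)
        ⊆ (Finset.Iio q₀).filter fun p => n ≤ (τ p).val := by
      intro x hx
      rcases Finset.mem_insert.mp hx with rfl | hx'
      · exact Finset.mem_filter.mpr ⟨Finset.mem_Iio.mpr hlt', hq⟩
      · have hx'' := Finset.mem_filter.mp hx'
        exact Finset.mem_filter.mpr ⟨Finset.mem_Iio.mpr (lt_trans (Finset.mem_Iio.mp hx''.1) hlt'), hx''.2⟩
    have := Finset.card_le_card hsub
    rw [Finset.card_insert_of_notMem hnm] at this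
    omega
  have hτkn : n ≤ (τ k).val := by
    rw [hτk, Fin.coe_natAdd]
    omega
  constructor
  · intro hc
    have hkk : k = k₀ := Fin.ext (by rw [hkval, hc]; show j + (i-1) = i + j - 1; omega)
    rw [← hkk]
    exact ⟨hτkn, hcBval⟩
  · rintro ⟨h1, h2⟩
    have hkk : k = k₀ := by
      rcases lt_trichotomy k k₀ with h | h | h
      · have := hrankmono k k₀ hτkn h
        rw [hcBval, h2] at this
        omega
      · exact h
      · have := hrankmono k₀ k h1 h
        rw [hcBval, h2] at this
        omega
    have : k.val = i + j - 1 := by rw [hkk]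
    omega

lemma fiber_card {n m : ℕ} (hm : 1 ≤ m) (S : Finset (Fin (n + m))) (hS : S.card = m) :
    (univ.filter fun τ : Equiv.Perm (Fin (n + m)) =>
        (univ.filter fun p => n ≤ (τ p).val) = S).card = m.factorial * n.factorial := by
  classical
  have key : {τ : Equiv.Perm (Fin (n + m)) // (univ.filter fun p => n ≤ (τ p).val) = S}
      ≃ (({x // x ∈ S} ≃ {x : Fin (n + m) // n ≤ x.val})
          × ({x // x ∉ S} ≃ {x : Fin (n + m) // ¬ n ≤ x.val})) := by
    have hmem : ∀ (τ : Equiv.Perm (Fin (n + m))),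
        ((univ.filter fun p => n ≤ (τ p).val) = S) ↔ (∀ p, p ∈ S ↔ n ≤ (τ p).val) := by
      intro τ
      constructor
      · intro h p
        rw [← h, Finset.mem_filter]
        simp
      · intro h
        ext p
        rw [Finset.mem_filter, ← h p]
        simp
    refine
      { toFun := fun τ =>
          ⟨Equiv.subtypeEquiv τ.1 ((hmem τ.1).mp τ.2),
           Equiv.subtypeEquiv τ.1 (fun p => not_iff_not.mpr ((hmem τ.1).mp τ.2 p))⟩
        invFun := fun e =>
          ⟨(Equiv.sumCompl (· ∈ S)).symm.trans
            ((e.1.sumCongr e.2).trans (Equiv.sumCompl (fun x : Fin (n + m) => n ≤ x.val))), ?_⟩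
        left_inv := ?_
        right_inv := ?_ }
    · rw [hmem]
      intro p
      by_cases hp : p ∈ S
      · simp [hp, Equiv.sumCompl_symm_apply_of_pos hp, (e.1 ⟨p, hp⟩).2]
      · simp only [hp, false_iff]
        simp [Equiv.sumCompl_symm_apply_of_neg hp, (e.2 ⟨p, hp⟩).2]
    · rintro ⟨τ, hτ⟩
      apply Subtype.ext
      apply Equiv.ext
      intro p
      by_cases hp : p ∈ S
      · simp [Equiv.sumCompl_symm_apply_of_pos hp]
      · simp [Equiv.sumCompl_symm_apply_of_neg hp]
    · rintro ⟨e₁, e₂⟩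
      apply Prod.ext
      · apply Equiv.ext
        rintro ⟨p, hp⟩
        apply Subtype.ext
        simp [Equiv.sumCompl_symm_apply_of_pos hp]
      · apply Equiv.ext
        rintro ⟨p, hp⟩
        apply Subtype.ext
        simp [Equiv.sumCompl_symm_apply_of_neg hp]
  have hcard1 : Fintype.card {x : Fin (n + m) // n ≤ x.val} = m := by
    rw [Fintype.card_subtype]
    have : (univ.filter fun x : Fin (n + m) => n ≤ x.val) = Finset.Ici (⟨n, by omega⟩ : Fin (n + m)) := by
      ext x
      simp [Finset.mem_Ici, Fin.le_def]
    rw [this, Fin.card_Ici]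
    show n + m - n = m
    omega
  have hcardS : Fintype.card {x // x ∈ S} = m := by rw [Fintype.card_coe, hS]
  have hcard2 : Fintype.card {x : Fin (n + m) // ¬ n ≤ x.val} = n := by
    rw [Fintype.card_subtype_compl, hcard1, Fintype.card_fin]
    omega
  have hcardSc : Fintype.card {x // x ∉ S} = n := by
    rw [Fintype.card_subtype_compl, hcardS, Fintype.card_fin]
    omega
  have := Fintype.card_congr key
  rw [Fintype.card_prod] at this
  rw [Fintype.card_equiv (Fintype.equivOfCardEq (hcardS.trans hcard1.symm))] at this
  rw [Fintype.card_equiv (Fintype.equivOfCardEq (hcardSc.trans hcard2.symm))] at this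
  rw [hcardS, hcardSc] at this
  rw [← this]
  rw [Fintype.card_subtype]

lemma subsets_card {N : ℕ} (k₀ : Fin N) (m i : ℕ) (hi1 : 1 ≤ i) (him : i ≤ m) :
    ((Finset.powersetCard m (univ : Finset (Fin N))).filter
        fun S => k₀ ∈ S ∧ (S.filter fun p => p < k₀).card = i - 1).card
      = (k₀.val.choose (i - 1)) * ((N - 1 - k₀.val).choose (m - i)) := by
  classical
  have hBcard : ∀ S : Finset (Fin N), S.card = m → k₀ ∈ S →
      (S.filter fun p => p < k₀).card = i - 1 →
      (S.filter fun p => k₀ < p).card = m - i := by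
    intro S hSm hk hA
    have h1 := Finset.card_filter_add_card_filter_not (s := S) (p := fun p => p < k₀)
    have h2 : (S.filter fun p => ¬ p < k₀) = insert k₀ (S.filter fun p => k₀ < p) := by
      ext p
      simp only [Finset.mem_filter, Finset.mem_insert]
      constructor
      · rintro ⟨hps, hnlt⟩
        rcases eq_or_lt_of_le (not_lt.mp hnlt) with h | h
        · exact Or.inl h.symm
        · exact Or.inr ⟨hps, h⟩
      · rintro (rfl | ⟨hps, hlt⟩)
        · exact ⟨hk, lt_irrefl _⟩
        · exact ⟨hps, not_lt.mpr (le_of_lt hlt)⟩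
    have h3 : k₀ ∉ (S.filter fun p => k₀ < p) := by
      simp [Finset.mem_filter]
    rw [h2, Finset.card_insert_of_notMem h3] at h1
    omega
  have main : ((Finset.powersetCard m (univ : Finset (Fin N))).filter
        fun S => k₀ ∈ S ∧ (S.filter fun p => p < k₀).card = i - 1).card
      = ((Finset.powersetCard (i - 1) (Finset.Iio k₀)) ×ˢ
          (Finset.powersetCard (m - i) (Finset.Ioi k₀))).card := by
      apply Finset.card_nbij' (fun S => (S.filter fun p => p < k₀, S.filter fun p => k₀ < p))
        (fun AB => insert k₀ (AB.1 ∪ AB.2))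
      · intro S hs
        rw [Finset.mem_coe, Finset.mem_filter, Finset.mem_powersetCard] at hs
        obtain ⟨⟨_, hSm⟩, hk, hA⟩ := hs
        rw [Finset.mem_coe, Finset.mem_product]
        constructor
        · rw [Finset.mem_powersetCard]
          exact ⟨fun p hp => Finset.mem_Iio.mpr (Finset.mem_filter.mp hp).2, hA⟩
        · rw [Finset.mem_powersetCard]
          exact ⟨fun p hp => Finset.mem_Ioi.mpr (Finset.mem_filter.mp hp).2, hBcard S hSm hk hA⟩
      · intro AB hab
        rw [Finset.mem_coe, Finset.mem_product] at hab
        rw [Finset.mem_powersetCard] at hab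
        obtain ⟨⟨hA1, hA2⟩, hB⟩ := hab
        rw [Finset.mem_powersetCard] at hB
        obtain ⟨hB1, hB2⟩ := hB
        have hkAB : k₀ ∉ AB.1 ∪ AB.2 := by
          intro h
          rcases Finset.mem_union.mp h with h | h
          · exact absurd (Finset.mem_Iio.mp (hA1 h)) (lt_irrefl _)
          · exact absurd (Finset.mem_Ioi.mp (hB1 h)) (lt_irrefl _)
        have hdisj : Disjoint AB.1 AB.2 := by
          rw [Finset.disjoint_left]
          intro p hp1 hp2
          exact absurd (lt_trans (Finset.mem_Iio.mp (hA1 hp1)) (Finset.mem_Ioi.mp (hB1 hp2)))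
            (lt_irrefl _)
        have hfilt : ((insert k₀ (AB.1 ∪ AB.2)).filter fun p => p < k₀) = AB.1 := by
          ext p
          simp only [Finset.mem_filter, Finset.mem_insert, Finset.mem_union]
          constructor
          · rintro ⟨rfl | h | h, hlt⟩
            · exact absurd hlt (lt_irrefl _)
            · exact h
            · exact absurd (lt_trans (Finset.mem_Ioi.mp (hB1 h)) hlt) (lt_irrefl _)
          · intro hp
            exact ⟨Or.inr (Or.inl hp), Finset.mem_Iio.mp (hA1 hp)⟩
        beta_reduce
        rw [Finset.mem_coe, Finset.mem_filter, Finset.mem_powersetCard]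
        refine ⟨⟨fun p _ => Finset.mem_univ _, ?_⟩, Finset.mem_insert_self _ _, ?_⟩
        · rw [Finset.card_insert_of_notMem hkAB, Finset.card_union_of_disjoint hdisj, hA2, hB2]
          omega
        · rw [hfilt, hA2]
      · intro S hs
        rw [Finset.mem_coe, Finset.mem_filter, Finset.mem_powersetCard] at hs
        obtain ⟨⟨_, hSm⟩, hk, hA⟩ := hs
        ext p
        simp only [Finset.mem_insert, Finset.mem_union, Finset.mem_filter]
        constructor
        · rintro (rfl | ⟨h, _⟩ | ⟨h, _⟩) <;> first | exact hk | exact h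
        · intro hp
          rcases lt_trichotomy p k₀ with h | h | h
          · exact Or.inr (Or.inl ⟨hp, h⟩)
          · exact Or.inl h
          · exact Or.inr (Or.inr ⟨hp, h⟩)
      · intro AB hab
        rw [Finset.mem_coe, Finset.mem_product] at hab
        rw [Finset.mem_powersetCard] at hab
        obtain ⟨⟨hA1, hA2⟩, hB⟩ := hab
        rw [Finset.mem_powersetCard] at hB
        obtain ⟨hB1, hB2⟩ := hB
        have hfilt : ((insert k₀ (AB.1 ∪ AB.2)).filter fun p => p < k₀) = AB.1 := by
          ext p
          simp only [Finset.mem_filter, Finset.mem_insert, Finset.mem_union]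
          constructor
          · rintro ⟨rfl | h | h, hlt⟩
            · exact absurd hlt (lt_irrefl _)
            · exact h
            · exact absurd (lt_trans (Finset.mem_Ioi.mp (hB1 h)) hlt) (lt_irrefl _)
          · intro hp
            exact ⟨Or.inr (Or.inl hp), Finset.mem_Iio.mp (hA1 hp)⟩
        have hfilt2 : ((insert k₀ (AB.1 ∪ AB.2)).filter fun p => k₀ < p) = AB.2 := by
          ext p
          simp only [Finset.mem_filter, Finset.mem_insert, Finset.mem_union]
          constructor
          · rintro ⟨rfl | h | h, hlt⟩
            · exact absurd hlt (lt_irrefl _)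
            · exact absurd (lt_trans (Finset.mem_Iio.mp (hA1 h)) hlt) (lt_irrefl _)
            · exact h
          · intro hp
            exact ⟨Or.inr (Or.inr hp), Finset.mem_Ioi.mp (hB1 hp)⟩
        exact Prod.ext hfilt hfilt2
  rw [main, Finset.card_product, Finset.card_powersetCard, Finset.card_powersetCard,
    Fin.card_Iio, Fin.card_Ioi]

lemma perm_count {n m : ℕ} (i j : ℕ) (hi1 : 1 ≤ i) (him : i ≤ m) (hj1 : 1 ≤ j) (hjn : j ≤ n) :
    (univ.filter fun τ : Equiv.Perm (Fin (n + m)) =>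
        n ≤ (τ ⟨i + j - 1, by omega⟩).val ∧
          ((Finset.Iio (⟨i + j - 1, by omega⟩ : Fin (n + m))).filter
              fun p => n ≤ (τ p).val).card = i - 1).card
      = (i + j - 1).choose (i - 1) * ((n + m) - 1 - (i + j - 1)).choose (m - i)
          * (m.factorial * n.factorial) := by
  classical
  set k₀ : Fin (n + m) := ⟨i + j - 1, by omega⟩ with hk₀
  set Φ : Equiv.Perm (Fin (n + m)) → Finset (Fin (n + m)) :=
    fun τ => univ.filter fun p => n ≤ (τ p).val with hΦ
  have hfix : (univ.filter fun x : Fin (n + m) => n ≤ x.val).card = m := by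
    have : (univ.filter fun x : Fin (n + m) => n ≤ x.val)
        = Finset.Ici (⟨n, by omega⟩ : Fin (n + m)) := by
      ext x
      simp [Finset.mem_Ici, Fin.le_def]
    rw [this, Fin.card_Ici]
    show n + m - n = m
    omega
  have hΦm : ∀ τ : Equiv.Perm (Fin (n + m)), (Φ τ).card = m := by
    intro τ
    refine Eq.trans ?_ hfix
    apply Finset.card_nbij' τ τ.symm
    · intro p hp
      rw [Finset.mem_coe, Finset.mem_filter] at hp ⊢
      exact ⟨Finset.mem_univ _, hp.2⟩
    · intro x hx
      rw [Finset.mem_coe, Finset.mem_filter] at hx ⊢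
      refine ⟨Finset.mem_univ _, ?_⟩
      rw [τ.apply_symm_apply]
      exact hx.2
    · intro p _
      exact τ.symm_apply_apply p
    · intro x _
      exact τ.apply_symm_apply x
  have hPredQ : ∀ τ : Equiv.Perm (Fin (n + m)),
      (n ≤ (τ k₀).val ∧ ((Finset.Iio k₀).filter fun p => n ≤ (τ p).val).card = i - 1)
        ↔ (k₀ ∈ Φ τ ∧ ((Φ τ).filter fun p => p < k₀).card = i - 1) := by
    intro τ
    have h1 : k₀ ∈ Φ τ ↔ n ≤ (τ k₀).val := by simp [hΦ]
    have h2 : ((Φ τ).filter fun p => p < k₀) = (Finset.Iio k₀).filter fun p => n ≤ (τ p).val := by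
      ext p
      simp [hΦ, Finset.mem_filter, Finset.mem_Iio, and_comm]
    rw [h1, h2]
  have hmain := Finset.card_eq_sum_card_fiberwise (f := Φ)
    (s := univ.filter fun τ : Equiv.Perm (Fin (n + m)) =>
        n ≤ (τ k₀).val ∧ ((Finset.Iio k₀).filter fun p => n ≤ (τ p).val).card = i - 1)
    (t := (Finset.powersetCard m (univ : Finset (Fin (n + m)))).filter
        fun S => k₀ ∈ S ∧ (S.filter fun p => p < k₀).card = i - 1)
    (by
      intro τ hτ
      rw [Finset.mem_coe, Finset.mem_filter] at hτ
      rw [Finset.mem_coe, Finset.mem_filter, Finset.mem_powersetCard]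
      exact ⟨⟨Finset.filter_subset _ _, hΦm τ⟩, (hPredQ τ).mp hτ.2⟩)
  rw [hmain]
  have hfib : ∀ S ∈ (Finset.powersetCard m (univ : Finset (Fin (n + m)))).filter
      fun S => k₀ ∈ S ∧ (S.filter fun p => p < k₀).card = i - 1,
      ((univ.filter fun τ : Equiv.Perm (Fin (n + m)) =>
          n ≤ (τ k₀).val ∧ ((Finset.Iio k₀).filter fun p => n ≤ (τ p).val).card = i - 1).filter
        fun τ => Φ τ = S).card = m.factorial * n.factorial := by
    intro S hS
    rw [Finset.mem_filter, Finset.mem_powersetCard] at hS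
    obtain ⟨⟨_, hSm⟩, hQ⟩ := hS
    have heq : ((univ.filter fun τ : Equiv.Perm (Fin (n + m)) =>
          n ≤ (τ k₀).val ∧ ((Finset.Iio k₀).filter fun p => n ≤ (τ p).val).card = i - 1).filter
        fun τ => Φ τ = S)
        = univ.filter fun τ : Equiv.Perm (Fin (n + m)) => Φ τ = S := by
      ext τ
      simp only [Finset.mem_filter, Finset.mem_univ, true_and]
      constructor
      · exact fun h => h.2
      · intro h
        exact ⟨(hPredQ τ).mpr (h ▸ hQ), h⟩
    rw [heq]
    exact fiber_card (le_trans hi1 him) S hSm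
  rw [Finset.sum_congr rfl hfib, Finset.sum_const, smul_eq_mul]
  rw [subsets_card k₀ m i hi1 him]

lemma strictMono_comp_unique {N : ℕ} {f : Fin N → ℝ} {τ τ' : Equiv.Perm (Fin N)}
    (h : StrictMono (f ∘ τ)) (h' : StrictMono (f ∘ τ')) : τ = τ' := by
  have h1 : τ = Tuple.sort f := by
    rw [Tuple.eq_sort_iff]
    refine ⟨h.monotone, fun p q hpq hfe => ?_⟩
    exact absurd hfe (ne_of_lt (h hpq))
  have h2 : τ' = Tuple.sort f := by
    rw [Tuple.eq_sort_iff]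
    refine ⟨h'.monotone, fun p q hpq hfe => ?_⟩
    exact absurd hfe (ne_of_lt (h' hpq))
  rw [h1, h2]

lemma strictMono_comp_inj {N : ℕ} {f : Fin N → ℝ} {τ : Equiv.Perm (Fin N)}
    (h : StrictMono (f ∘ τ)) : Function.Injective f := by
  intro a b hab
  have : τ (τ.symm a) = a := τ.apply_symm_apply a
  have hinj : Function.Injective (f ∘ τ) := h.injective
  have : τ.symm a = τ.symm b := by
    apply hinj
    show f (τ (τ.symm a)) = f (τ (τ.symm b))
    rw [τ.apply_symm_apply, τ.apply_symm_apply]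
    exact hab
  have := congrArg τ this
  rwa [τ.apply_symm_apply, τ.apply_symm_apply] at this

/-- Let `(L^c_1, …, L^c_n, L_1, …, L_m)` be an exchangeable family of real random variables
(encoded as `W : Ω → Fin (n+m) → ℝ`, first `n` coordinates calibration, last `m` out-of-sample)
with almost surely no ties, `n, m ≥ 1`.  Then for `1 ≤ i ≤ m` and `1 ≤ j ≤ n`,
`Pr[L^c_(j) ≤ L_(i) < L^c_(j+1)] = C(n−j+m−i, n−j)·C(j+i−1, j) / C(n+m, m)`, where for `j = n`
the event is interpreted as `{L^c_(n) ≤ L_(i)}` (the second condition is vacuous). -/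
theorem prob_order_stat_between (n m : ℕ) (hn : 1 ≤ n) (hm : 1 ≤ m)
    {Ω : Type*} [MeasurableSpace Ω] (ℙ : Measure Ω) [IsProbabilityMeasure ℙ]
    (W : Ω → Fin (n + m) → ℝ) (hW : Measurable W)
    (hexch : ∀ σ : Equiv.Perm (Fin (n + m)),
      Measure.map (fun ω => W ω ∘ σ) ℙ = Measure.map W ℙ)
    (hties : ∀ a b : Fin (n + m), a ≠ b → ℙ {ω | W ω a = W ω b} = 0)
    (i j : ℕ) (hi1 : 1 ≤ i) (him : i ≤ m) (hj1 : 1 ≤ j) (hjn : j ≤ n) :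
    ℙ {ω |
        orderStat (fun a : Fin n => W ω (Fin.castAdd m a)) ⟨j - 1, by omega⟩
          ≤ orderStat (fun b : Fin m => W ω (Fin.natAdd n b)) ⟨i - 1, by omega⟩
        ∧ ∀ h : j < n,
            orderStat (fun b : Fin m => W ω (Fin.natAdd n b)) ⟨i - 1, by omega⟩
              < orderStat (fun a : Fin n => W ω (Fin.castAdd m a)) ⟨j, h⟩}
      = ENNReal.ofReal
          ((Nat.choose (n - j + m - i) (n - j) * Nat.choose (j + i - 1) j : ℝ)
            / Nat.choose (n + m) m) := by
  classical
  -- measurability of the strict-monotonicity sets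
  have hMs : ∀ τ : Equiv.Perm (Fin (n + m)),
      MeasurableSet {f : Fin (n + m) → ℝ | StrictMono (f ∘ τ)} := by
    intro τ
    have : {f : Fin (n + m) → ℝ | StrictMono (f ∘ τ)}
        = ⋂ (p : Fin (n + m)) (q : Fin (n + m)) (_ : p < q), {f | f (τ p) < f (τ q)} := by
      ext f
      simp only [Set.mem_iInter, Set.mem_setOf_eq]
      exact ⟨fun h p q hpq => h hpq, fun h p q hpq => h p q hpq⟩
    rw [this]
    exact MeasurableSet.iInter fun p => MeasurableSet.iInter fun q =>
      MeasurableSet.iInter fun _ =>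
        measurableSet_lt (measurable_pi_apply _) (measurable_pi_apply _)
  have hM1 : MeasurableSet {f : Fin (n + m) → ℝ | StrictMono f} := hMs (Equiv.refl _)
  have hWτ : ∀ τ : Equiv.Perm (Fin (n + m)), Measurable (fun ω => W ω ∘ τ) := fun τ =>
    measurable_pi_lambda _ fun p => (measurable_pi_apply (τ p)).comp hW
  set c : ENNReal := ℙ (W ⁻¹' {f | StrictMono f}) with hcdef
  have hA : ∀ τ : Equiv.Perm (Fin (n + m)),
      ℙ (W ⁻¹' {f | StrictMono (f ∘ τ)}) = c := by
    intro τ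
    have h1 : W ⁻¹' {f | StrictMono (f ∘ τ)} = (fun ω => W ω ∘ τ) ⁻¹' {f | StrictMono f} := rfl
    rw [h1, ← Measure.map_apply (hWτ τ) hM1, hexch τ, Measure.map_apply hW hM1]
  -- a.s. injectivity
  have hInjNull : ℙ (W ⁻¹' {f : Fin (n + m) → ℝ | ¬ Function.Injective f}) = 0 := by
    have hsub : W ⁻¹' {f : Fin (n + m) → ℝ | ¬ Function.Injective f}
        ⊆ ⋃ (a : Fin (n + m)) (b : Fin (n + m)), {ω | a ≠ b ∧ W ω a = W ω b} := by
      intro ω hω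
      simp only [Set.mem_preimage, Set.mem_setOf_eq, Function.Injective, not_forall] at hω
      obtain ⟨a, b, hab, hne⟩ := hω
      exact Set.mem_iUnion.mpr ⟨a, Set.mem_iUnion.mpr ⟨b, ⟨hne, hab⟩⟩⟩
    refine measure_mono_null hsub (measure_iUnion_null fun a => measure_iUnion_null fun b => ?_)
    by_cases hab : a = b
    · subst hab
      have : {ω | a ≠ a ∧ W ω a = W ω a} = (∅ : Set Ω) := by
        ext ω; simp
      rw [this]
      exact measure_empty
    · exact measure_mono_null (fun ω hω => hω.2) (hties a b hab)
  have hInjOne : ℙ (W ⁻¹' {f : Fin (n + m) → ℝ | Function.Injective f}) = 1 := by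
    refine le_antisymm prob_le_one ?_
    have h1 : (1 : ENNReal) = ℙ Set.univ := (measure_univ).symm
    have h2 : (Set.univ : Set Ω) ⊆ (W ⁻¹' {f | Function.Injective f})
        ∪ (W ⁻¹' {f | ¬ Function.Injective f}) := by
      intro ω _
      by_cases h : Function.Injective (W ω)
      · exact Or.inl h
      · exact Or.inr h
    calc (1 : ENNReal) = ℙ Set.univ := h1
      _ ≤ ℙ ((W ⁻¹' {f | Function.Injective f}) ∪ (W ⁻¹' {f | ¬ Function.Injective f})) :=
          measure_mono h2
      _ ≤ ℙ (W ⁻¹' {f | Function.Injective f}) + ℙ (W ⁻¹' {f | ¬ Function.Injective f}) :=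
          measure_union_le _ _
      _ = ℙ (W ⁻¹' {f | Function.Injective f}) := by rw [hInjNull, add_zero]
  -- the union of all strict-mono events is the injectivity event
  have hUnion : (⋃ τ : Equiv.Perm (Fin (n + m)), W ⁻¹' {f | StrictMono (f ∘ τ)})
      = W ⁻¹' {f : Fin (n + m) → ℝ | Function.Injective f} := by
    apply Set.Subset.antisymm
    · intro ω hω
      obtain ⟨τ, hτ⟩ := Set.mem_iUnion.mp hω
      exact strictMono_comp_inj hτ
    · intro ω hω
      refine Set.mem_iUnion.mpr ⟨Tuple.sort (W ω), ?_⟩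
      exact (Tuple.monotone_sort (W ω)).strictMono_of_injective
        (Function.Injective.comp hω (Tuple.sort (W ω)).injective)
  have hDisj : Pairwise (Function.onFun Disjoint
      fun τ : Equiv.Perm (Fin (n + m)) => W ⁻¹' {f | StrictMono (f ∘ τ)}) := by
    intro τ τ' hne
    rw [Function.onFun, Set.disjoint_left]
    intro ω h1 h2
    exact hne (strictMono_comp_unique h1 h2)
  -- total mass computation
  have hsum : (Fintype.card (Equiv.Perm (Fin (n + m))) : ENNReal) * c = 1 := by
    have h1 : ℙ (⋃ τ : Equiv.Perm (Fin (n + m)), W ⁻¹' {f | StrictMono (f ∘ τ)})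
        = ∑' τ : Equiv.Perm (Fin (n + m)), ℙ (W ⁻¹' {f | StrictMono (f ∘ τ)}) :=
      measure_iUnion hDisj fun τ => hW (hMs τ)
    rw [hUnion, hInjOne] at h1
    rw [tsum_fintype] at h1
    have h2 : ∑ τ : Equiv.Perm (Fin (n + m)), ℙ (W ⁻¹' {f | StrictMono (f ∘ τ)})
        = (Fintype.card (Equiv.Perm (Fin (n + m)))) • c := by
      rw [Finset.sum_congr rfl (fun τ _ => hA τ), Finset.sum_const, Finset.card_univ]
    rw [h2, nsmul_eq_mul] at h1
    exact h1.symm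
  have hcardne : (Fintype.card (Equiv.Perm (Fin (n + m))) : ENNReal) ≠ 0 := by
    simp [Fintype.card_perm, Nat.factorial_ne_zero]
  have hcardnetop : (Fintype.card (Equiv.Perm (Fin (n + m))) : ENNReal) ≠ ⊤ :=
    ENNReal.natCast_ne_top _
  have hcval : c = (Fintype.card (Equiv.Perm (Fin (n + m))) : ENNReal)⁻¹ := by
    calc c = 1 * c := (one_mul c).symm
      _ = ((Fintype.card (Equiv.Perm (Fin (n + m))) : ENNReal)⁻¹
            * (Fintype.card (Equiv.Perm (Fin (n + m))) : ENNReal)) * c := by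
          rw [ENNReal.inv_mul_cancel hcardne hcardnetop]
      _ = (Fintype.card (Equiv.Perm (Fin (n + m))) : ENNReal)⁻¹
            * ((Fintype.card (Equiv.Perm (Fin (n + m))) : ENNReal) * c) := by ring
      _ = (Fintype.card (Equiv.Perm (Fin (n + m))) : ENNReal)⁻¹ := by rw [hsum, mul_one]
  -- the good permutations
  set good : Finset (Equiv.Perm (Fin (n + m))) :=
    univ.filter (fun τ : Equiv.Perm (Fin (n + m)) =>
        n ≤ (τ ⟨i + j - 1, by omega⟩).val ∧
          ((Finset.Iio (⟨i + j - 1, by omega⟩ : Fin (n + m))).filter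
              fun p => n ≤ (τ p).val).card = i - 1) with hgood
  set T : Set Ω := {ω |
        orderStat (fun a : Fin n => W ω (Fin.castAdd m a)) ⟨j - 1, by omega⟩
          ≤ orderStat (fun b : Fin m => W ω (Fin.natAdd n b)) ⟨i - 1, by omega⟩
        ∧ ∀ h : j < n,
            orderStat (fun b : Fin m => W ω (Fin.natAdd n b)) ⟨i - 1, by omega⟩
              < orderStat (fun a : Fin n => W ω (Fin.castAdd m a)) ⟨j, h⟩} with hT
  set U : Set Ω := ⋃ τ ∈ good, W ⁻¹' {f | StrictMono (f ∘ τ)} with hU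
  have hiff : ∀ ω : Ω, Function.Injective (W ω) → (ω ∈ T ↔ ω ∈ U) := by
    intro ω hf
    have hτ₀ : StrictMono (W ω ∘ Tuple.sort (W ω)) :=
      (Tuple.monotone_sort (W ω)).strictMono_of_injective
        (Function.Injective.comp hf (Tuple.sort (W ω)).injective)
    set τ₀ := Tuple.sort (W ω) with hτ₀def
    have h1 : ω ∈ T ↔ (univ.filter fun a : Fin n =>
        W ω (Fin.castAdd m a)
          < orderStat (fun b : Fin m => W ω (Fin.natAdd n b)) ⟨i - 1, by omega⟩).card = j :=
      event_iff_card i j hi1 him hj1 hjn hf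
    have h2 := card_eq_iff_pred i j hi1 him hj1 hjn hf hτ₀
    rw [h1, h2]
    constructor
    · intro hp
      refine Set.mem_iUnion₂.mpr ⟨τ₀, ?_, hτ₀⟩
      rw [hgood, Finset.mem_filter]
      exact ⟨Finset.mem_univ _, hp⟩
    · intro hu
      obtain ⟨τ, hτg, hτs⟩ := Set.mem_iUnion₂.mp hu
      have : τ = τ₀ := strictMono_comp_unique hτs hτ₀
      rw [hgood, Finset.mem_filter] at hτg
      exact this ▸ hτg.2
  have hae : T =ᵐ[ℙ] U := by
    rw [Filter.eventuallyEq_set]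
    have hinj : ∀ᵐ ω ∂ℙ, Function.Injective (W ω) := by
      rw [MeasureTheory.ae_iff]
      exact hInjNull
    filter_upwards [hinj] with ω hω
    exact hiff ω hω
  have hPT : ℙ T = (good.card : ENNReal) * c := by
    rw [measure_congr hae, hU]
    rw [measure_biUnion_finset ?_ (fun τ _ => hW (hMs τ))]
    · rw [Finset.sum_congr rfl (fun τ _ => hA τ), Finset.sum_const, nsmul_eq_mul]
    · intro τ _ τ' _ hne
      exact hDisj hne
  -- cardinality of good
  have hgoodcard : good.card
      = (i + j - 1).choose (i - 1) * ((n + m) - 1 - (i + j - 1)).choose (m - i)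
          * (m.factorial * n.factorial) := by
    rw [hgood]
    exact perm_count i j hi1 him hj1 hjn
  -- final arithmetic
  rw [hPT, hcval, hgoodcard, Fintype.card_perm, Fintype.card_fin]
  rw [← div_eq_mul_inv]
  have hchoosepos : (0 : ℝ) < ((n + m).choose m : ℝ) := by
    exact_mod_cast Nat.choose_pos (by omega)
  rw [ENNReal.ofReal_div_of_pos hchoosepos]
  have hcast1 : ENNReal.ofReal (((n - j + m - i).choose (n - j) : ℝ) * ((j + i - 1).choose j : ℝ))
      = (((n - j + m - i).choose (n - j) * (j + i - 1).choose j : ℕ) : ENNReal) := by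
    rw [← Nat.cast_mul, ENNReal.ofReal_natCast]
  have hcast2 : ENNReal.ofReal (((n + m).choose m : ℝ))
      = (((n + m).choose m : ℕ) : ENNReal) := ENNReal.ofReal_natCast _
  rw [hcast1, hcast2]
  rw [ENNReal.div_eq_div_iff (by exact_mod_cast Nat.choose_pos (by omega : m ≤ n + m) |>.ne')
    (by exact ENNReal.natCast_ne_top _)
    (by exact_mod_cast (Nat.factorial_pos (n + m)).ne') (by exact ENNReal.natCast_ne_top _)]
  have hnat : ((n + m).choose m) * ((i + j - 1).choose (i - 1)
        * ((n + m) - 1 - (i + j - 1)).choose (m - i) * (m.factorial * n.factorial))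
      = (n + m).factorial * ((n - j + m - i).choose (n - j) * (j + i - 1).choose j) := by
    have hA' : (i + j - 1).choose (i - 1) = (j + i - 1).choose j := by
      have e1 : i + j - 1 = j + i - 1 := by omega
      have e2 : i - 1 = (j + i - 1) - j := by omega
      rw [e1, e2, Nat.choose_symm (by omega)]
    have hB' : ((n + m) - 1 - (i + j - 1)).choose (m - i) = (n - j + m - i).choose (n - j) := by
      have e1 : (n + m) - 1 - (i + j - 1) = n - j + m - i := by omega
      have e2 : m - i = (n - j + m - i) - (n - j) := by omega
      rw [e1, e2, Nat.choose_symm (by omega)]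
    have hfact : (n + m).choose m * m.factorial * n.factorial = (n + m).factorial := by
      have := Nat.choose_mul_factorial_mul_factorial (show m ≤ n + m by omega)
      have e : n + m - m = n := by omega
      rw [e] at this
      exact this
    rw [hA', hB', ← hfact]
    ring
  exact_mod_cast hnat
end

section
/- Let (L^c_1, …, L^c_n, L_1, …, L_m) be an exchangeable family of real-valued random variables with almost surely no ties, where n, m ≥ 1. Let L^c_{(1)} ≤ … ≤ L^c_{(n)} be the order statistics of the first n variables and L_{(1)} ≤ … ≤ L_{(m)} those of the last m variables. Then for every β ∈ (0,1] and every 1 ≤ k ≤ n, Pr[L_{(⌈mβ⌉)} > L^c_{(k)}] = Σ_{j=k}^{n} C(n−j+m−⌈mβ⌉, n−j) · C(j+⌈mβ⌉−1, j) / C(n+m, m). -/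
open MeasureTheory

section Aux
open Finset Function

variable {α : Type*} [LinearOrder α] [DecidableEq α]

lemma L1 (s : Finset α) {c : ℕ} (h : s.card = c) (i : Fin c) :
    (s.filter (· < s.orderEmbOfFin h i)).card = i := by
  have hs : s.filter (· < s.orderEmbOfFin h i) = (Finset.Iio i).image (s.orderEmbOfFin h) := by
    ext x
    simp only [mem_filter, mem_image, mem_Iio]
    constructor
    · rintro ⟨hx, hlt⟩
      obtain ⟨j, rfl⟩ : ∃ j, s.orderEmbOfFin h j = x := by
        have := s.range_orderEmbOfFin h
        have : x ∈ Set.range (s.orderEmbOfFin h) := by rw [this]; exact hx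
        exact this
      exact ⟨j, by simpa using hlt, rfl⟩
    · rintro ⟨j, hj, rfl⟩
      exact ⟨s.orderEmbOfFin_mem h j, by simpa using hj⟩
  rw [hs, Finset.card_image_of_injective _ (s.orderEmbOfFin h).injective]
  simp

lemma L3 (s : Finset α) {c : ℕ} (h : s.card = c) (i : Fin c) (x : α) :
    s.orderEmbOfFin h i < x ↔ (i : ℕ) < (s.filter (· < x)).card := by
  constructor
  · intro hx
    have hsub : (Finset.Iic i).image (s.orderEmbOfFin h) ⊆ s.filter (· < x) := by
      intro y hy
      simp only [mem_image, mem_Iic] at hy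
      obtain ⟨j, hj, rfl⟩ := hy
      refine mem_filter.2 ⟨s.orderEmbOfFin_mem h j, lt_of_le_of_lt ?_ hx⟩
      exact (s.orderEmbOfFin h).monotone hj
    calc (i : ℕ) < (Finset.Iic i).card := by simp
      _ = ((Finset.Iic i).image (s.orderEmbOfFin h)).card :=
          (Finset.card_image_of_injective _ (s.orderEmbOfFin h).injective).symm
      _ ≤ _ := Finset.card_le_card hsub
  · intro hc
    by_contra hx
    push_neg at hx
    have : s.filter (· < x) ⊆ s.filter (· < s.orderEmbOfFin h i) := by
      intro y hy
      simp only [mem_filter] at hy ⊢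
      exact ⟨hy.1, lt_of_lt_of_le hy.2 hx⟩
    have := Finset.card_le_card this
    rw [L1] at this
    omega

lemma L4 (s : Finset α) {c : ℕ} (h : s.card = c) (i : Fin c) (x : α)
    (hx : x ∈ s) (hcard : (s.filter (· < x)).card = i) : s.orderEmbOfFin h i = x := by
  obtain ⟨j, rfl⟩ : ∃ j, s.orderEmbOfFin h j = x := by
    have hr := s.range_orderEmbOfFin h
    have : x ∈ Set.range (s.orderEmbOfFin h) := by rw [hr]; exact hx
    exact this
  rw [L1] at hcard
  congr 1
  exact Fin.ext hcard.symm

lemma sort_eq_orderEmbOfFin {p : ℕ} (g : Fin p → α) (hg : Function.Injective g) :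
    g ∘ (Tuple.sort g) = (Finset.univ.image g).orderEmbOfFin
      (by rw [Finset.card_image_of_injective _ hg]; simp) := by
  apply Finset.orderEmbOfFin_unique
  · intro x; exact Finset.mem_image_of_mem _ (Finset.mem_univ _)
  · exact (Tuple.monotone_sort g).strictMono_of_injective
      (hg.comp (Tuple.sort g).injective)

lemma filter_card_partition {N : ℕ} (A : Finset (Fin N)) (x : Fin N) :
    (A.filter (· < x)).card + (Aᶜ.filter (· < x)).card = (x : ℕ) := by
  have h1 : (A.filter (· < x)) ∪ (Aᶜ.filter (· < x)) = Finset.univ.filter (· < x) := by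
    rw [← Finset.filter_union, Finset.union_compl]
  have h2 : Disjoint (A.filter (· < x)) (Aᶜ.filter (· < x)) :=
    (disjoint_compl_right).mono (Finset.filter_subset _ _) (Finset.filter_subset _ _)
  have h3 := Finset.card_union_of_disjoint h2
  rw [h1] at h3
  rw [← h3]
  rw [show Finset.univ.filter (· < x) = Finset.Iio x from by ext y; simp]
  simp

lemma cond_iff {n m k r : ℕ} (hk1 : 1 ≤ k) (hkn : k ≤ n) (hr1 : 1 ≤ r) (hrm : r ≤ m)
    (A : Finset (Fin (n+m))) (hA : A.card = n) (hB : Aᶜ.card = m) :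
    A.orderEmbOfFin hA ⟨k-1, by omega⟩ < Aᶜ.orderEmbOfFin hB ⟨r-1, by omega⟩ ↔
      k ≤ (A.filter (fun x : Fin (n+m) => (x:ℕ) < k + r - 1)).card := by
  set p := Aᶜ.orderEmbOfFin hB ⟨r-1, by omega⟩ with hp
  have hL1 : (Aᶜ.filter (· < p)).card = r - 1 := L1 _ _ _
  have hpart := filter_card_partition A p
  have ht : k + r - 1 < n + m := by omega
  set t : Fin (n+m) := ⟨k + r - 1, ht⟩ with htdef
  have hfilt : A.filter (fun x : Fin (n+m) => (x:ℕ) < k + r - 1) = A.filter (· < t) := by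
    apply Finset.filter_congr; intro x _; simp [htdef, Fin.lt_def]
  rw [hfilt]
  have hL3A : A.orderEmbOfFin hA ⟨k-1, by omega⟩ < p ↔ (k - 1 : ℕ) < (A.filter (· < p)).card :=
    L3 A hA _ p
  have hL3B : p < t ↔ (r - 1 : ℕ) < (Aᶜ.filter (· < t)).card := L3 Aᶜ hB _ t
  have hpart2 := filter_card_partition A t
  have htval : (t : ℕ) = k + r - 1 := rfl
  constructor
  · intro h
    have h1 := hL3A.mp h
    have h2 : ¬ p < t := by
      intro hlt
      have : (p : ℕ) < (t : ℕ) := hlt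
      omega
    have h3 := (not_iff_not.mpr hL3B).mp h2
    omega
  · intro h
    have h2 : ¬ p < t := by
      intro hlt
      have h3 := hL3B.mp hlt
      omega
    have hpt : (t : ℕ) ≤ (p : ℕ) := by
      have : ¬ ((p:ℕ) < (t:ℕ)) := fun hc => h2 hc
      omega
    apply hL3A.mpr
    omega

lemma orderStat_eq_emb {N p : ℕ} (f : Fin N → ℝ) (σ : Equiv.Perm (Fin N))
    (hσ : StrictMono (f ∘ σ)) (e : Fin p → Fin N) (he : Function.Injective e)
    (hcard : (Finset.univ.image (fun a => σ.symm (e a))).card = p) (i : Fin p) :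
    orderStat (f ∘ e) i
      = (f ∘ σ) ((Finset.univ.image (fun a => σ.symm (e a))).orderEmbOfFin hcard i) := by
  have hf : Function.Injective f := by
    intro a b hab
    have : (f ∘ σ) (σ.symm a) = (f ∘ σ) (σ.symm b) := by simp [hab]
    have := hσ.injective this
    simpa using congrArg σ this
  have hg : Function.Injective (f ∘ e) := hf.comp he
  have hL : orderStat (f ∘ e) i
      = (Finset.univ.image (f ∘ e)).orderEmbOfFin
          (by rw [Finset.card_image_of_injective _ hg]; simp) i := by
    have := sort_eq_orderEmbOfFin (f ∘ e) hg
    exact congrFun this i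
  rw [hL]
  have hR : (fun j : Fin p => (f ∘ σ) ((Finset.univ.image (fun a => σ.symm (e a))).orderEmbOfFin hcard j))
      = (Finset.univ.image (f ∘ e)).orderEmbOfFin
          (by rw [Finset.card_image_of_injective _ hg]; simp) := by
    apply Finset.orderEmbOfFin_unique
    · intro x
      have hmem := Finset.orderEmbOfFin_mem (Finset.univ.image (fun a => σ.symm (e a))) hcard x
      rw [Finset.mem_image] at hmem
      obtain ⟨a, _, ha⟩ := hmem
      rw [← ha]
      simp only [Function.comp_apply, Equiv.apply_symm_apply]
      exact Finset.mem_image_of_mem _ (Finset.mem_univ a)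
    · exact hσ.comp (Finset.orderEmbOfFin _ hcard).strictMono
  exact (congrFun hR i).symm

lemma perm_eq_of_strictMono {N : ℕ} (f : Fin N → ℝ) (σ τ : Equiv.Perm (Fin N))
    (hσ : StrictMono (f ∘ σ)) (hτ : StrictMono (f ∘ τ)) : σ = τ := by
  set γ : Equiv.Perm (Fin N) := τ.trans σ.symm with hγ
  have hγmono : StrictMono ⇑γ := by
    intro a b hab
    have h1 : (f ∘ σ) (γ a) < (f ∘ σ) (γ b) := by
      simpa [hγ, Function.comp] using hτ hab
    exact (hσ.lt_iff_lt).mp h1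
  have hid : ⇑γ = id := by
    have hcard : (Finset.univ : Finset (Fin N)).card = N := by simp
    have h1 : ⇑γ = Finset.univ.orderEmbOfFin hcard :=
      Finset.orderEmbOfFin_unique hcard (fun x => Finset.mem_univ _) hγmono
    have h2 : (id : Fin N → Fin N) = Finset.univ.orderEmbOfFin hcard :=
      Finset.orderEmbOfFin_unique hcard (fun x => Finset.mem_univ _) strictMono_id
    rw [h1, h2]
  have : γ = 1 := Equiv.ext (fun x => congrFun hid x)
  have := congrArg (fun (e : Equiv.Perm (Fin N)) => e.trans σ) this
  simpa [hγ, Equiv.trans_assoc, Equiv.Perm.one_trans] using this.symm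

lemma exists_mem_castAdd {n m : ℕ} (σ : Equiv.Perm (Fin (n+m))) (x : Fin (n+m)) :
    (∃ a : Fin n, σ.symm (Fin.castAdd m a) = x) ↔ ((σ x : Fin (n+m)) : ℕ) < n := by
  constructor
  · rintro ⟨a, ha⟩
    have : Fin.castAdd m a = σ x := by
      rw [← ha]; simp
    rw [← this]; simpa using a.isLt
  · intro h
    refine ⟨⟨(σ x : Fin (n+m)), h⟩, ?_⟩
    have : Fin.castAdd m (⟨(σ x : Fin (n+m)), h⟩ : Fin n) = σ x := by
      apply Fin.ext; simp
    rw [this]; simp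

lemma exists_mem_natAdd {n m : ℕ} (σ : Equiv.Perm (Fin (n+m))) (x : Fin (n+m)) :
    (∃ b : Fin m, σ.symm (Fin.natAdd n b) = x) ↔ n ≤ ((σ x : Fin (n+m)) : ℕ) := by
  constructor
  · rintro ⟨b, hb⟩
    have : Fin.natAdd n b = σ x := by rw [← hb]; simp
    rw [← this]; simp
  · intro h
    have hlt : ((σ x : Fin (n+m)) : ℕ) - n < m := by
      have := (σ x).isLt; omega
    refine ⟨⟨(σ x : Fin (n+m)) - n, hlt⟩, ?_⟩
    have : Fin.natAdd n (⟨(σ x : Fin (n+m)) - n, hlt⟩ : Fin m) = σ x := by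
      apply Fin.ext; simp; omega
    rw [this]; simp

lemma image_natAdd_eq_compl {n m : ℕ} (σ : Equiv.Perm (Fin (n+m))) :
    Finset.univ.image (fun b : Fin m => σ.symm (Fin.natAdd n b))
      = (Finset.univ.image (fun a : Fin n => σ.symm (Fin.castAdd m a)))ᶜ := by
  ext x
  simp only [Finset.mem_image, Finset.mem_compl, Finset.mem_univ, true_and]
  rw [show (∃ b, σ.symm (Fin.natAdd n b) = x) ↔ n ≤ ((σ x : Fin (n+m)) : ℕ) from
    exists_mem_natAdd σ x]
  rw [show (∃ a, σ.symm (Fin.castAdd m a) = x) ↔ ((σ x : Fin (n+m)) : ℕ) < n from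
    exists_mem_castAdd σ x]
  omega

lemma card_image_castAdd {n m : ℕ} (σ : Equiv.Perm (Fin (n+m))) :
    (Finset.univ.image (fun a : Fin n => σ.symm (Fin.castAdd m a))).card = n := by
  rw [show (fun a : Fin n => σ.symm (Fin.castAdd m a)) = σ.symm ∘ Fin.castAdd m from rfl,
    Finset.card_image_of_injective _ (σ.symm.injective.comp (Fin.castAdd_injective n m))]
  simp

lemma natAdd_injective {n m : ℕ} : Function.Injective (Fin.natAdd n : Fin m → Fin (n+m)) := by
  intro a b hab
  apply Fin.ext
  have := congrArg Fin.val hab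
  simpa using this

lemma orderEmbOfFin_congr {α : Type*} [LinearOrder α] {s t : Finset α} (hst : s = t) {c : ℕ}
    (h : s.card = c) (i : Fin c) : s.orderEmbOfFin h i = t.orderEmbOfFin (hst ▸ h) i := by
  subst hst; rfl

lemma card_image_natAdd {n m : ℕ} (σ : Equiv.Perm (Fin (n+m))) :
    (Finset.univ.image (fun b : Fin m => σ.symm (Fin.natAdd n b))).card = m := by
  rw [show (fun b : Fin m => σ.symm (Fin.natAdd n b)) = σ.symm ∘ Fin.natAdd n from rfl,
    Finset.card_image_of_injective _ (σ.symm.injective.comp natAdd_injective)]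
  simp

lemma event_iff {n m k r : ℕ} (hk1 : 1 ≤ k) (hkn : k ≤ n) (hr1 : 1 ≤ r) (hrm : r ≤ m)
    (f : Fin (n+m) → ℝ) (σ : Equiv.Perm (Fin (n+m))) (hσ : StrictMono (f ∘ ⇑σ)) :
    (orderStat (fun a : Fin n => f (Fin.castAdd m a)) ⟨k-1, by omega⟩
       < orderStat (fun b : Fin m => f (Fin.natAdd n b)) ⟨r-1, by omega⟩)
    ↔ k ≤ ((Finset.univ.image (fun a : Fin n => σ.symm (Fin.castAdd m a))).filter
            (fun x : Fin (n+m) => (x:ℕ) < k + r - 1)).card := by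
  have hA := card_image_castAdd σ
  have hB := card_image_natAdd σ
  have e1 := orderStat_eq_emb f σ hσ (Fin.castAdd m) (Fin.castAdd_injective n m) hA
    ⟨k-1, by omega⟩
  have e2 := orderStat_eq_emb f σ hσ (Fin.natAdd n) natAdd_injective hB ⟨r-1, by omega⟩
  rw [show (fun a : Fin n => f (Fin.castAdd m a)) = f ∘ Fin.castAdd m from rfl, e1,
    show (fun b : Fin m => f (Fin.natAdd n b)) = f ∘ Fin.natAdd n from rfl, e2,
    hσ.lt_iff_lt]
  rw [orderEmbOfFin_congr (image_natAdd_eq_compl σ) hB]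
  exact cond_iff hk1 hkn hr1 hrm _ hA _

def psi {N : ℕ} (r : ℕ) (A : Finset (Fin N)) : ℕ :=
  (A.filter (fun a => ((Aᶜ).filter (· < a)).card < r)).card

section Count
variable {n m k r : ℕ}

lemma cond_iff_p (hk1 : 1 ≤ k) (hkn : k ≤ n) (hr1 : 1 ≤ r) (hrm : r ≤ m)
    (A : Finset (Fin (n+m))) (hB : Aᶜ.card = m) :
    (k ≤ (A.filter (fun x : Fin (n+m) => (x:ℕ) < k + r - 1)).card)
      ↔ k + r - 1 ≤ ((Aᶜ.orderEmbOfFin hB ⟨r-1, by omega⟩ : Fin (n+m)) : ℕ) := by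
  set p := Aᶜ.orderEmbOfFin hB ⟨r-1, by omega⟩ with hp
  have ht : k + r - 1 < n + m := by omega
  set t : Fin (n+m) := ⟨k+r-1, ht⟩ with htdef
  have hL3B : p < t ↔ ((r:ℕ)-1) < (Aᶜ.filter (· < t)).card := L3 Aᶜ hB _ t
  have hpart := filter_card_partition A t
  have hfilt : A.filter (fun x : Fin (n+m) => (x:ℕ) < k + r - 1) = A.filter (· < t) := by
    apply Finset.filter_congr; intro x _; simp [htdef, Fin.lt_def]
  rw [hfilt]
  have htv : (t : ℕ) = k + r - 1 := rfl
  have hlt : p < t ↔ (p : ℕ) < k + r - 1 := by rw [Fin.lt_def, htv]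
  constructor
  · intro h
    have h2 : ¬ p < t := fun hc => by have := hL3B.mp hc; omega
    rw [hlt] at h2; omega
  · intro h
    have h2 : ¬ p < t := by rw [hlt]; omega
    have h3 := (not_iff_not.mpr hL3B).mp h2
    omega

lemma psi_eq (hr1 : 1 ≤ r) (hrm : r ≤ m)
    (A : Finset (Fin (n+m))) (hB : Aᶜ.card = m) :
    psi r A = (A.filter (· < Aᶜ.orderEmbOfFin hB ⟨r-1, by omega⟩)).card := by
  unfold psi
  congr 1
  apply Finset.filter_congr
  intro a ha
  set p := Aᶜ.orderEmbOfFin hB ⟨r-1, by omega⟩ with hp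
  have h3 : p < a ↔ ((r:ℕ)-1) < (Aᶜ.filter (· < a)).card := L3 Aᶜ hB _ a
  have hne : a ≠ p := by
    intro hc
    have hpA : p ∈ Aᶜ := Finset.orderEmbOfFin_mem _ hB _
    rw [← hc] at hpA
    exact (Finset.mem_compl.mp hpA) ha
  constructor
  · intro hcard
    rcases lt_trichotomy a p with h | h | h
    · exact h
    · exact absurd h hne
    · exact absurd (h3.mp h) (by omega)
  · intro hap
    have : ¬ p < a := fun hc => absurd hap (not_lt.mpr hc.le)
    have := (not_iff_not.mpr h3).mp this
    omega

lemma count_V (hk1 : 1 ≤ k) (hkn : k ≤ n) (hr1 : 1 ≤ r) (hrm : r ≤ m) :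
    ((Finset.powersetCard n (Finset.univ : Finset (Fin (n+m)))).filter
        (fun A => k ≤ (A.filter (fun x : Fin (n+m) => (x:ℕ) < k + r - 1)).card)).card
      = ∑ j ∈ Finset.Icc k n, (j+r-1).choose j * (n-j+m-r).choose (n-j) := by
  set V := (Finset.powersetCard n (Finset.univ : Finset (Fin (n+m)))).filter
      (fun A => k ≤ (A.filter (fun x : Fin (n+m) => (x:ℕ) < k + r - 1)).card) with hV
  have hmemV : ∀ A ∈ V, A.card = n ∧
      k ≤ (A.filter (fun x : Fin (n+m) => (x:ℕ) < k + r - 1)).card := by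
    intro A hA
    rw [hV, Finset.mem_filter, Finset.mem_powersetCard] at hA
    exact ⟨hA.1.2, hA.2⟩
  have hcompl : ∀ A : Finset (Fin (n+m)), A.card = n → Aᶜ.card = m := by
    intro A hA
    rw [Finset.card_compl, hA]
    simp
  -- key fact: for A ∈ V, the value of p
  have hkey : ∀ A ∈ V, ∀ (hB : Aᶜ.card = m),
      ((Aᶜ.orderEmbOfFin hB ⟨r-1, by omega⟩ : Fin (n+m)) : ℕ) = psi r A + r - 1
        ∧ k ≤ psi r A ∧ psi r A ≤ n := by
    intro A hA hB
    obtain ⟨hcard, hcond⟩ := hmemV A hA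
    set p := Aᶜ.orderEmbOfFin hB ⟨r-1, by omega⟩ with hp
    have h1 : (Aᶜ.filter (· < p)).card = r - 1 := by
      have := L1 Aᶜ hB ⟨r-1, by omega⟩
      simpa using this
    have h2 : psi r A = (A.filter (· < p)).card := psi_eq hr1 hrm A hB
    have hpart := filter_card_partition A p
    have hple := (cond_iff_p hk1 hkn hr1 hrm A hB).mp hcond
    have hψn : psi r A ≤ n := by
      rw [h2]; exact le_trans (Finset.card_filter_le _ _) (le_of_eq hcard)
    refine ⟨by omega, by omega, hψn⟩
  rw [Finset.card_eq_sum_card_fiberwise (f := psi r) (t := Finset.Icc k n)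
    (fun A hA => by
      have hB := hcompl A (hmemV A hA).1
      have := hkey A hA hB
      rw [Finset.mem_coe, Finset.mem_Icc]
      exact ⟨this.2.1, this.2.2⟩)]
  apply Finset.sum_congr rfl
  intro j hj
  rw [Finset.mem_Icc] at hj
  have hpjlt : j + r - 1 < n + m := by omega
  set pj : Fin (n+m) := ⟨j + r - 1, hpjlt⟩ with hpj
  have hIio : (Finset.Iio pj).card = j + r - 1 := by simp [hpj]
  have hIoi : (Finset.Ioi pj).card = n - j + m - r := by
    simp only [Fin.card_Ioi]  -- guess; fix if fails
    have hv : (pj : ℕ) = j + r - 1 := rfl; omega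
  rw [show (j+r-1).choose j * (n-j+m-r).choose (n-j)
      = ((Finset.powersetCard j (Finset.Iio pj)) ×ˢ
          (Finset.powersetCard (n-j) (Finset.Ioi pj))).card from by
    rw [Finset.card_product, Finset.card_powersetCard, Finset.card_powersetCard, hIio, hIoi]]
  refine Finset.card_bij' (fun A _ => (A.filter (· < pj), A.filter (fun x => pj < x)))
    (fun P _ => P.1 ∪ P.2) ?hi ?hj ?left ?right
  case hi =>
    intro A hA
    rw [Finset.mem_filter] at hA
    obtain ⟨hAV, hψ⟩ := hA
    obtain ⟨hcard, hcond⟩ := hmemV A hAV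
    have hB := hcompl A hcard
    set p := Aᶜ.orderEmbOfFin hB ⟨r-1, by omega⟩ with hp
    have h1 : (Aᶜ.filter (· < p)).card = r - 1 := by
      exact L1 Aᶜ hB ⟨r-1, by omega⟩
    have h2 : psi r A = (A.filter (· < p)).card := psi_eq hr1 hrm A hB
    have hpart := filter_card_partition A p
    have hpval : (p : ℕ) = j + r - 1 := by
      have := (hkey A hAV hB).1
      rw [hψ] at this
      exact this
    have hppj : p = pj := Fin.ext hpval
    have hpnA : pj ∉ A := by
      have : p ∈ Aᶜ := Finset.orderEmbOfFin_mem _ hB _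
      rw [hppj] at this
      exact Finset.mem_compl.mp this
    have hcard1 : (A.filter (· < pj)).card = j := by
      rw [← hppj, ← h2, hψ]
    have hfle : A.filter (fun x => x ≤ pj) = A.filter (· < pj) := by
      apply Finset.filter_congr
      intro x hx
      constructor
      · intro hle
        rcases lt_or_eq_of_le hle with h | h
        · exact h
        · exact absurd (h ▸ hx) hpnA
      · exact le_of_lt
    have hsplit := Finset.card_filter_add_card_filter_not
      (s := A) (p := fun x => x ≤ pj)
    have hneg : A.filter (fun x => ¬ x ≤ pj) = A.filter (fun x => pj < x) := by
      apply Finset.filter_congr; intro x _; exact not_le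
    rw [hfle, hneg, hcard1, hcard] at hsplit
    rw [Finset.mem_product]
    constructor
    · rw [Finset.mem_powersetCard]
      exact ⟨fun x hx => by rw [Finset.mem_filter] at hx; exact Finset.mem_Iio.mpr hx.2,
        hcard1⟩
    · rw [Finset.mem_powersetCard]
      refine ⟨fun x hx => by rw [Finset.mem_filter] at hx; exact Finset.mem_Ioi.mpr hx.2, ?_⟩
      show (A.filter (fun x => pj < x)).card = n - j
      omega
  case hj =>
    intro P hP
    rw [Finset.mem_product, Finset.mem_powersetCard, Finset.mem_powersetCard] at hP
    obtain ⟨⟨hS, hScard⟩, hT, hTcard⟩ := hP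
    have hSlt : ∀ x ∈ P.1, x < pj := fun x hx => Finset.mem_Iio.mp (hS hx)
    have hTgt : ∀ x ∈ P.2, pj < x := fun x hx => Finset.mem_Ioi.mp (hT hx)
    have hdisj : Disjoint P.1 P.2 := by
      rw [Finset.disjoint_left]
      intro x hx1 hx2
      exact absurd (hTgt x hx2) (not_lt.mpr (hSlt x hx1).le)
    have hcardA : (P.1 ∪ P.2).card = n := by
      rw [Finset.card_union_of_disjoint hdisj, hScard, hTcard]; omega
    have hpjnot : pj ∉ P.1 ∪ P.2 := by
      rw [Finset.mem_union]
      rintro (h | h)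
      · exact absurd (hSlt _ h) (lt_irrefl _)
      · exact absurd (hTgt _ h) (lt_irrefl _)
    set A := P.1 ∪ P.2 with hAdef
    have hB := hcompl A hcardA
    have hfS : A.filter (· < pj) = P.1 := by
      ext x
      rw [Finset.mem_filter, Finset.mem_union]
      constructor
      · rintro ⟨h1 | h1, h2⟩
        · exact h1
        · exact absurd (hTgt x h1) (not_lt.mpr h2.le)
      · intro hx
        exact ⟨Or.inl hx, hSlt x hx⟩
    have hfT : A.filter (fun x => pj < x) = P.2 := by
      ext x
      rw [Finset.mem_filter, Finset.mem_union]
      constructor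
      · rintro ⟨h1 | h1, h2⟩
        · exact absurd (hSlt x h1) (not_lt.mpr h2.le)
        · exact h1
      · intro hx
        exact ⟨Or.inr hx, hTgt x hx⟩
    have hpart := filter_card_partition A pj
    have hfScard : (A.filter (· < pj)).card = j := by rw [hfS, hScard]
    have hBcard : (Aᶜ.filter (· < pj)).card = r - 1 := by
      have hv : (pj : ℕ) = j + r - 1 := rfl
      omega
    have hpjB : pj ∈ Aᶜ := Finset.mem_compl.mpr hpjnot
    have hpeq : Aᶜ.orderEmbOfFin hB ⟨r-1, by omega⟩ = pj := by
      apply L4 Aᶜ hB ⟨r-1, by omega⟩ pj hpjB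
      simpa using hBcard
    have hψA : psi r A = j := by
      rw [psi_eq hr1 hrm A hB, hpeq, hfScard]
    have hcondA : k ≤ (A.filter (fun x : Fin (n+m) => (x:ℕ) < k + r - 1)).card := by
      apply (cond_iff_p hk1 hkn hr1 hrm A hB).mpr
      rw [hpeq]
      show k + r - 1 ≤ j + r - 1
      omega
    rw [Finset.mem_filter]
    refine ⟨?_, hψA⟩
    rw [hV, Finset.mem_filter, Finset.mem_powersetCard]
    exact ⟨⟨Finset.subset_univ _, hcardA⟩, hcondA⟩
  case left =>
    intro A hA
    dsimp only
    rw [Finset.mem_filter] at hA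
    obtain ⟨hAV, hψ⟩ := hA
    obtain ⟨hcard, hcond⟩ := hmemV A hAV
    have hB := hcompl A hcard
    have hpval : ((Aᶜ.orderEmbOfFin hB ⟨r-1, by omega⟩ : Fin (n+m)) : ℕ) = j + r - 1 := by
      have := (hkey A hAV hB).1; rw [hψ] at this; exact this
    have hpnA : pj ∉ A := by
      have h0 : Aᶜ.orderEmbOfFin hB ⟨r-1, by omega⟩ ∈ Aᶜ := Finset.orderEmbOfFin_mem _ hB _
      have hppj : Aᶜ.orderEmbOfFin hB ⟨r-1, by omega⟩ = pj := Fin.ext hpval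
      rw [hppj] at h0
      exact Finset.mem_compl.mp h0
    ext x
    rw [Finset.mem_union, Finset.mem_filter, Finset.mem_filter]
    constructor
    · rintro (⟨h, _⟩ | ⟨h, _⟩) <;> exact h
    · intro hx
      rcases lt_trichotomy x pj with h | h | h
      · exact Or.inl ⟨hx, h⟩
      · exact absurd (h ▸ hx) hpnA
      · exact Or.inr ⟨hx, h⟩
  case right =>
    intro P hP
    rw [Finset.mem_product, Finset.mem_powersetCard, Finset.mem_powersetCard] at hP
    obtain ⟨⟨hS, hScard⟩, hT, hTcard⟩ := hP
    have hSlt : ∀ x ∈ P.1, x < pj := fun x hx => Finset.mem_Iio.mp (hS hx)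
    have hTgt : ∀ x ∈ P.2, pj < x := fun x hx => Finset.mem_Ioi.mp (hT hx)
    have hfS : (P.1 ∪ P.2).filter (· < pj) = P.1 := by
      ext x
      rw [Finset.mem_filter, Finset.mem_union]
      constructor
      · rintro ⟨h1 | h1, h2⟩
        · exact h1
        · exact absurd (hTgt x h1) (not_lt.mpr h2.le)
      · intro hx
        exact ⟨Or.inl hx, hSlt x hx⟩
    have hfT : (P.1 ∪ P.2).filter (fun x => pj < x) = P.2 := by
      ext x
      rw [Finset.mem_filter, Finset.mem_union]
      constructor
      · rintro ⟨h1 | h1, h2⟩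
        · exact absurd (hSlt x h1) (not_lt.mpr h2.le)
        · exact h1
      · intro hx
        exact ⟨Or.inr hx, hTgt x hx⟩
    rw [hfS, hfT]

end Count

def Aset {n m : ℕ} (σ : Equiv.Perm (Fin (n+m))) : Finset (Fin (n+m)) :=
  Finset.univ.image (fun a : Fin n => σ.symm (Fin.castAdd m a))

section FiberPerm
variable {n m : ℕ}

noncomputable def gEquiv (A : Finset (Fin (n+m))) (hA : A.card = n) (hB : Aᶜ.card = m) :
    Fin n ⊕ Fin m ≃ Fin (n+m) :=
  (Equiv.sumCongr (A.orderIsoOfFin hA).toEquiv ((Aᶜ).orderIsoOfFin hB).toEquiv).trans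
    ((Equiv.sumCongr (Equiv.refl _)
        (Equiv.subtypeEquivRight (fun x => Finset.mem_compl))).trans
      (Equiv.sumCompl (· ∈ A)))

noncomputable def Fmap (A : Finset (Fin (n+m))) (hA : A.card = n) (hB : Aᶜ.card = m)
    (P : Equiv.Perm (Fin n) × Equiv.Perm (Fin m)) : Equiv.Perm (Fin (n+m)) :=
  (finSumFinEquiv.symm.trans ((Equiv.sumCongr P.1 P.2).trans (gEquiv A hA hB))).symm

lemma Fmap_symm_castAdd (A : Finset (Fin (n+m))) (hA : A.card = n) (hB : Aᶜ.card = m)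
    (P : Equiv.Perm (Fin n) × Equiv.Perm (Fin m)) (a : Fin n) :
    (Fmap A hA hB P).symm (Fin.castAdd m a) = ((A.orderIsoOfFin hA) (P.1 a) : Fin (n+m)) := by
  simp [Fmap, gEquiv, finSumFinEquiv_symm_apply_castAdd]

lemma Fmap_symm_natAdd (A : Finset (Fin (n+m))) (hA : A.card = n) (hB : Aᶜ.card = m)
    (P : Equiv.Perm (Fin n) × Equiv.Perm (Fin m)) (b : Fin m) :
    (Fmap A hA hB P).symm (Fin.natAdd n b) = ((Aᶜ.orderIsoOfFin hB) (P.2 b) : Fin (n+m)) := by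
  simp [Fmap, gEquiv, finSumFinEquiv_symm_apply_natAdd]

lemma fiber_perm_card (A : Finset (Fin (n+m))) (hA : A.card = n) (hB : Aᶜ.card = m) :
    ((Finset.univ : Finset (Equiv.Perm (Fin (n+m)))).filter (fun σ => Aset σ = A)).card
      = n.factorial * m.factorial := by
  have hcardP : (Finset.univ : Finset (Equiv.Perm (Fin n) × Equiv.Perm (Fin m))).card
      = n.factorial * m.factorial := by
    simp [Finset.card_univ, Fintype.card_prod, Fintype.card_perm]
  rw [← hcardP]
  apply (Finset.card_bij (fun P _ => Fmap A hA hB P) ?_ ?_ ?_).symm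
  · -- membership
    intro P _
    rw [Finset.mem_filter]
    refine ⟨Finset.mem_univ _, ?_⟩
    have himg : Aset (Fmap A hA hB P)
        = Finset.univ.image (fun a : Fin n => ((A.orderIsoOfFin hA) (P.1 a) : Fin (n+m))) := by
      unfold Aset
      apply Finset.image_congr
      intro a _
      exact Fmap_symm_castAdd A hA hB P a
    rw [himg]
    apply Finset.eq_of_subset_of_card_le
    · intro x hx
      rw [Finset.mem_image] at hx
      obtain ⟨a, _, rfl⟩ := hx
      exact ((A.orderIsoOfFin hA) (P.1 a)).2
    · rw [show (fun a : Fin n => ((A.orderIsoOfFin hA) (P.1 a) : Fin (n+m)))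
          = Subtype.val ∘ (A.orderIsoOfFin hA) ∘ P.1 from rfl,
        Finset.card_image_of_injective _
          (Subtype.val_injective.comp ((A.orderIsoOfFin hA).injective.comp P.1.injective))]
      simp [hA]
  · -- injective
    intro P hP Q hQ hPQ
    have hsymm : (Fmap A hA hB P).symm = (Fmap A hA hB Q).symm := by
      rw [hPQ]
    have h1 : P.1 = Q.1 := by
      apply Equiv.ext
      intro a
      have := congrFun (congrArg (fun e : Equiv.Perm (Fin (n+m)) => (e : Fin (n+m) → Fin (n+m))) hsymm) (Fin.castAdd m a)
      rw [Fmap_symm_castAdd, Fmap_symm_castAdd] at this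
      exact (A.orderIsoOfFin hA).injective (Subtype.val_injective this)
    have h2 : P.2 = Q.2 := by
      apply Equiv.ext
      intro b
      have := congrFun (congrArg (fun e : Equiv.Perm (Fin (n+m)) => (e : Fin (n+m) → Fin (n+m))) hsymm) (Fin.natAdd n b)
      rw [Fmap_symm_natAdd, Fmap_symm_natAdd] at this
      exact (Aᶜ.orderIsoOfFin hB).injective (Subtype.val_injective this)
    exact Prod.ext h1 h2
  · -- surjective
    intro τ hτ
    rw [Finset.mem_filter] at hτ
    have hτA : Aset τ = A := hτ.2
    have hmem1 : ∀ a : Fin n, τ.symm (Fin.castAdd m a) ∈ A := by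
      intro a
      rw [← hτA]
      exact Finset.mem_image_of_mem _ (Finset.mem_univ a)
    have hmem2 : ∀ b : Fin m, τ.symm (Fin.natAdd n b) ∈ Aᶜ := by
      intro b
      have := image_natAdd_eq_compl τ
      rw [show (Finset.univ.image (fun a : Fin n => τ.symm (Fin.castAdd m a))) = A from hτA]
        at this
      rw [← this]
      exact Finset.mem_image_of_mem _ (Finset.mem_univ b)
    set u : Fin n → Fin n :=
      fun a => (A.orderIsoOfFin hA).symm ⟨τ.symm (Fin.castAdd m a), hmem1 a⟩ with hu
    set v : Fin m → Fin m :=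
      fun b => ((Aᶜ).orderIsoOfFin hB).symm ⟨τ.symm (Fin.natAdd n b), hmem2 b⟩ with hv
    have hu_inj : Function.Injective u := by
      intro a b hab
      have := congrArg (A.orderIsoOfFin hA) hab
      simp only [hu, OrderIso.apply_symm_apply] at this
      have := congrArg Subtype.val this
      exact (Fin.castAdd_injective n m) (τ.symm.injective this)
    have hv_inj : Function.Injective v := by
      intro a b hab
      have := congrArg ((Aᶜ).orderIsoOfFin hB) hab
      simp only [hv, OrderIso.apply_symm_apply] at this
      have := congrArg Subtype.val this
      exact natAdd_injective (τ.symm.injective this)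
    refine ⟨(Equiv.ofBijective u (Finite.injective_iff_bijective.mp hu_inj),
      Equiv.ofBijective v (Finite.injective_iff_bijective.mp hv_inj)), Finset.mem_univ _, ?_⟩
    have hsymm : (Fmap A hA hB (Equiv.ofBijective u (Finite.injective_iff_bijective.mp hu_inj),
        Equiv.ofBijective v (Finite.injective_iff_bijective.mp hv_inj))).symm = τ.symm := by
      apply Equiv.ext
      intro x
      induction x using Fin.addCases with
      | left a =>
        rw [Fmap_symm_castAdd]
        show ((A.orderIsoOfFin hA) (u a) : Fin (n+m)) = _
        rw [hu, OrderIso.apply_symm_apply]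
      | right b =>
        rw [Fmap_symm_natAdd]
        show (((Aᶜ).orderIsoOfFin hB) (v b) : Fin (n+m)) = _
        rw [hv, OrderIso.apply_symm_apply]
    have := congrArg Equiv.symm hsymm
    simpa using this

end FiberPerm

lemma good_count {n m k r : ℕ} (hk1 : 1 ≤ k) (hkn : k ≤ n) (hr1 : 1 ≤ r) (hrm : r ≤ m) :
    ((Finset.univ : Finset (Equiv.Perm (Fin (n+m)))).filter
        (fun σ => k ≤ ((Aset σ).filter (fun x : Fin (n+m) => (x:ℕ) < k+r-1)).card)).card
      = (∑ j ∈ Finset.Icc k n, (j+r-1).choose j * (n-j+m-r).choose (n-j))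
          * (n.factorial * m.factorial) := by
  set V := (Finset.powersetCard n (Finset.univ : Finset (Fin (n+m)))).filter
      (fun A => k ≤ (A.filter (fun x : Fin (n+m) => (x:ℕ) < k + r - 1)).card) with hV
  set G := (Finset.univ : Finset (Equiv.Perm (Fin (n+m)))).filter
      (fun σ => k ≤ ((Aset σ).filter (fun x : Fin (n+m) => (x:ℕ) < k+r-1)).card) with hG
  have hmap : ∀ σ ∈ G, Aset σ ∈ V := by
    intro σ hσ
    rw [hG, Finset.mem_filter] at hσ
    rw [hV, Finset.mem_filter, Finset.mem_powersetCard]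
    exact ⟨⟨Finset.subset_univ _, card_image_castAdd σ⟩, hσ.2⟩
  rw [Finset.card_eq_sum_card_fiberwise hmap]
  have hfib : ∀ A ∈ V, (G.filter (fun σ => Aset σ = A)).card
      = n.factorial * m.factorial := by
    intro A hAV
    rw [hV, Finset.mem_filter, Finset.mem_powersetCard] at hAV
    obtain ⟨⟨_, hcard⟩, hcond⟩ := hAV
    have hB : Aᶜ.card = m := by rw [Finset.card_compl, hcard]; simp
    rw [show G.filter (fun σ => Aset σ = A)
        = (Finset.univ : Finset (Equiv.Perm (Fin (n+m)))).filter (fun σ => Aset σ = A) from by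
      ext σ
      rw [Finset.mem_filter, hG, Finset.mem_filter, Finset.mem_filter]
      constructor
      · rintro ⟨⟨h1, _⟩, h3⟩; exact ⟨h1, h3⟩
      · rintro ⟨h1, h3⟩; exact ⟨⟨h1, by rw [h3]; exact hcond⟩, h3⟩]
    exact fiber_perm_card A hcard hB
  rw [Finset.sum_congr rfl hfib, Finset.sum_const, smul_eq_mul,
    show V.card = ∑ j ∈ Finset.Icc k n, (j+r-1).choose j * (n-j+m-r).choose (n-j) from
      count_V hk1 hkn hr1 hrm]

open MeasureTheory in
lemma main_prob {n m k r : ℕ} (hn : 1 ≤ n) (hm : 1 ≤ m) (hk1 : 1 ≤ k) (hkn : k ≤ n)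
    (hr1 : 1 ≤ r) (hrm : r ≤ m)
    {Ω : Type*} [MeasurableSpace Ω] (ℙ : Measure Ω) [IsProbabilityMeasure ℙ]
    (W : Ω → Fin (n + m) → ℝ) (hW : Measurable W)
    (hexch : ∀ σ : Equiv.Perm (Fin (n + m)),
      Measure.map (fun ω => W ω ∘ σ) ℙ = Measure.map W ℙ)
    (hties : ∀ a b : Fin (n + m), a ≠ b → ℙ {ω | W ω a = W ω b} = 0)
    (hk' : k - 1 < n) (hr' : r - 1 < m) :
    ℙ {ω | orderStat (fun a : Fin n => W ω (Fin.castAdd m a)) ⟨k-1, hk'⟩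
         < orderStat (fun b : Fin m => W ω (Fin.natAdd n b)) ⟨r-1, hr'⟩}
      = ENNReal.ofReal (∑ j ∈ Finset.Icc k n,
          ((n-j+m-r).choose (n-j) * (j+r-1).choose j : ℝ) / (n+m).choose m) := by
  classical
  set M : Set (Fin (n+m) → ℝ) := {f | StrictMono f} with hM
  have hMmeas : MeasurableSet M := by
    have hMeq : M = ⋂ (i : Fin (n+m)), ⋂ (j : Fin (n+m)), ⋂ (_ : i < j),
        {f : Fin (n+m) → ℝ | f i < f j} := by
      ext f
      simp only [hM, Set.mem_iInter, Set.mem_setOf_eq]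
      exact ⟨fun h i j hij => h hij, fun h a b hab => h a b hab⟩
    rw [hMeq]
    exact MeasurableSet.iInter fun i => MeasurableSet.iInter fun j =>
      MeasurableSet.iInter fun _ =>
        measurableSet_lt (measurable_pi_apply i) (measurable_pi_apply j)
  set U : Equiv.Perm (Fin (n+m)) → Set Ω := fun σ => (fun ω => W ω ∘ ⇑σ) ⁻¹' M with hU
  have hcompmeas : ∀ σ : Equiv.Perm (Fin (n+m)), Measurable (fun ω => W ω ∘ ⇑σ) := by
    intro σ
    apply measurable_pi_lambda
    intro i
    exact (measurable_pi_apply (σ i)).comp hW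
  have hUmeas : ∀ σ, MeasurableSet (U σ) := fun σ => (hcompmeas σ) hMmeas
  have hUmem : ∀ σ (ω : Ω), ω ∈ U σ ↔ StrictMono (W ω ∘ ⇑σ) := fun σ ω => Iff.rfl
  have hUeq : ∀ σ, ℙ (U σ) = ℙ (U 1) := by
    intro σ
    have h1 : ℙ (U σ) = Measure.map (fun ω => W ω ∘ ⇑σ) ℙ M :=
      (Measure.map_apply (hcompmeas σ) hMmeas).symm
    have h2 : ℙ (U 1) = Measure.map (fun ω => W ω ∘ ⇑(1 : Equiv.Perm (Fin (n+m)))) ℙ M :=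
      (Measure.map_apply (hcompmeas 1) hMmeas).symm
    rw [h1, h2, hexch σ, hexch 1]
  have hUdisj : ∀ σ τ : Equiv.Perm (Fin (n+m)), σ ≠ τ → Disjoint (U σ) (U τ) := by
    intro σ τ hστ
    rw [Set.disjoint_left]
    intro ω hσ hτ
    exact hστ (perm_eq_of_strictMono (W ω) σ τ ((hUmem σ ω).mp hσ) ((hUmem τ ω).mp hτ))
  set T : Set Ω := ⋃ σ : Equiv.Perm (Fin (n+m)), U σ with hT
  have hTmeas : MeasurableSet T := MeasurableSet.iUnion hUmeas
  have hTcompl : ℙ Tᶜ = 0 := by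
    have hsub : Tᶜ ⊆ ⋃ (a : Fin (n+m)), ⋃ (b : Fin (n+m)), ⋃ (_ : a ≠ b),
        {ω | W ω a = W ω b} := by
      intro ω hω
      by_contra hc
      simp only [Set.mem_iUnion, Set.mem_setOf_eq, not_exists] at hc
      have hinj : Function.Injective (W ω) := by
        intro a b hab
        by_contra hne
        exact hc a b hne hab
      apply hω
      rw [hT, Set.mem_iUnion]
      refine ⟨Tuple.sort (W ω), ?_⟩
      rw [hUmem]
      exact (Tuple.monotone_sort (W ω)).strictMono_of_injective
        (hinj.comp (Tuple.sort (W ω)).injective)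
    have h0 : ℙ (⋃ (a : Fin (n+m)), ⋃ (b : Fin (n+m)), ⋃ (_ : a ≠ b),
        {ω | W ω a = W ω b}) = 0 :=
      measure_iUnion_null fun a => measure_iUnion_null fun b =>
        measure_iUnion_null fun h => hties a b h
    exact le_antisymm (h0 ▸ measure_mono hsub) zero_le
  have hTone : ℙ T = 1 := (prob_compl_eq_zero_iff hTmeas).mp hTcompl
  set c := ℙ (U 1) with hc
  have hbiUnion : (⋃ σ ∈ (Finset.univ : Finset (Equiv.Perm (Fin (n+m)))), U σ) = T := by
    simp [hT]
  have hsum : ∑ σ ∈ (Finset.univ : Finset (Equiv.Perm (Fin (n+m)))), ℙ (U σ) = 1 := by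
    rw [← measure_biUnion_finset (fun σ _ τ _ hne => hUdisj σ τ hne)
      (fun b _ => hUmeas b), hbiUnion, hTone]
  have hcval : ((n+m).factorial : ENNReal) * c = 1 := by
    have h1 : ∑ σ ∈ (Finset.univ : Finset (Equiv.Perm (Fin (n+m)))), ℙ (U σ)
        = ((Finset.univ : Finset (Equiv.Perm (Fin (n+m)))).card : ENNReal) * c := by
      rw [Finset.sum_congr rfl (fun σ _ => hUeq σ), Finset.sum_const, nsmul_eq_mul]
    have h2 : (Finset.univ : Finset (Equiv.Perm (Fin (n+m)))).card = (n+m).factorial := by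
      simp [Finset.card_univ, Fintype.card_perm]
    rw [h2] at h1
    rw [← h1, hsum]
  have hfacne : ((n+m).factorial : ENNReal) ≠ 0 :=
    Nat.cast_ne_zero.mpr (Nat.factorial_pos (n+m)).ne'
  have hfacnt : ((n+m).factorial : ENNReal) ≠ ⊤ := ENNReal.natCast_ne_top _
  have hcinv : c = ((n+m).factorial : ENNReal)⁻¹ := by
    calc c = (((n+m).factorial : ENNReal)⁻¹ * ((n+m).factorial : ENNReal)) * c := by
          rw [ENNReal.inv_mul_cancel hfacne hfacnt, one_mul]
      _ = ((n+m).factorial : ENNReal)⁻¹ * (((n+m).factorial : ENNReal) * c) := by ring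
      _ = ((n+m).factorial : ENNReal)⁻¹ := by rw [hcval, mul_one]
  set E : Set Ω := {ω | orderStat (fun a : Fin n => W ω (Fin.castAdd m a)) ⟨k-1, hk'⟩
      < orderStat (fun b : Fin m => W ω (Fin.natAdd n b)) ⟨r-1, hr'⟩} with hE
  set G := (Finset.univ : Finset (Equiv.Perm (Fin (n+m)))).filter
      (fun σ => k ≤ ((Aset σ).filter (fun x : Fin (n+m) => (x:ℕ) < k+r-1)).card) with hG
  have hEU : ∀ σ, ∀ ω ∈ U σ,
      (ω ∈ E ↔ k ≤ ((Aset σ).filter (fun x : Fin (n+m) => (x:ℕ) < k+r-1)).card) := by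
    intro σ ω hω
    exact event_iff hk1 hkn hr1 hrm (W ω) σ ((hUmem σ ω).mp hω)
  have hET : E ∩ T = ⋃ σ ∈ G, U σ := by
    ext ω
    simp only [Set.mem_inter_iff, hT, Set.mem_iUnion, hG, Finset.mem_filter,
      Finset.mem_univ, true_and]
    constructor
    · rintro ⟨hEω, σ, hσ⟩
      exact ⟨σ, (hEU σ ω hσ).mp hEω, hσ⟩
    · rintro ⟨σ, hσG, hσ⟩
      exact ⟨(hEU σ ω hσ).mpr hσG, σ, hσ⟩
  have hPE : ℙ E = ℙ (E ∩ T) := by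
    have h2 := measure_inter_add_diff (μ := ℙ) E hTmeas
    have h3 : ℙ (E \ T) = 0 :=
      le_antisymm (le_trans (measure_mono (fun x hx => hx.2)) (le_of_eq hTcompl)) zero_le
    rw [← h2, h3, add_zero]
  rw [hPE, hET, measure_biUnion_finset (fun σ _ τ _ hne => hUdisj σ τ hne)
    (fun σ _ => hUmeas σ), Finset.sum_congr rfl (fun σ hσ => hUeq σ), Finset.sum_const,
    nsmul_eq_mul]
  have hGcard : G.card = (∑ j ∈ Finset.Icc k n, (j+r-1).choose j * (n-j+m-r).choose (n-j))
      * (n.factorial * m.factorial) := good_count hk1 hkn hr1 hrm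
  rw [hGcard, hcinv]
  set S := ∑ j ∈ Finset.Icc k n, (j+r-1).choose j * (n-j+m-r).choose (n-j) with hS
  have hsumreal : ∑ j ∈ Finset.Icc k n,
      ((n-j+m-r).choose (n-j) * (j+r-1).choose j : ℝ) / (n+m).choose m
        = (S : ℝ) / ((n+m).choose m : ℝ) := by
    rw [← Finset.sum_div]
    congr 1
    rw [hS]
    push_cast
    apply Finset.sum_congr rfl
    intro j _
    ring
  rw [hsumreal]
  have hCBpos : (0:ℝ) < ((n+m).choose m : ℝ) := by
    exact_mod_cast Nat.choose_pos (by omega : m ≤ n + m)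
  rw [ENNReal.ofReal_div_of_pos hCBpos, ENNReal.ofReal_natCast, ENNReal.ofReal_natCast]
  have hCBne : (((n+m).choose m : ℕ) : ENNReal) ≠ 0 :=
    Nat.cast_ne_zero.mpr (Nat.choose_pos (by omega : m ≤ n + m)).ne'
  have hCBnt : (((n+m).choose m : ℕ) : ENNReal) ≠ ⊤ := ENNReal.natCast_ne_top _
  rw [← div_eq_mul_inv]
  rw [ENNReal.div_eq_div_iff hCBne hCBnt hfacne hfacnt]
  have hnat : ((n+m).choose m) * (S * (n.factorial * m.factorial)) = (n+m).factorial * S := by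
    have hfact := Nat.choose_mul_factorial_mul_factorial (show m ≤ n + m by omega)
    have hnm : n + m - m = n := by omega
    rw [hnm] at hfact
    calc ((n+m).choose m) * (S * (n.factorial * m.factorial))
        = ((n+m).choose m * m.factorial * n.factorial) * S := by ring
      _ = (n+m).factorial * S := by rw [hfact]
  exact_mod_cast hnat

end Aux

/-- Let `(L^c_1, …, L^c_n, L_1, …, L_m)` be an exchangeable family of real random variables
with almost surely no ties, `n, m ≥ 1`.  Then for every `β ∈ (0,1]` and `1 ≤ k ≤ n`,
`Pr[L_(⌈mβ⌉) > L^c_(k)] = Σ_{j=k}^{n} C(n−j+m−⌈mβ⌉, n−j)·C(j+⌈mβ⌉−1, j) / C(n+m, m)`. -/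
theorem prob_order_stat_exceeds (n m : ℕ) (hn : 1 ≤ n) (hm : 1 ≤ m)
    {Ω : Type*} [MeasurableSpace Ω] (ℙ : Measure Ω) [IsProbabilityMeasure ℙ]
    (W : Ω → Fin (n + m) → ℝ) (hW : Measurable W)
    (hexch : ∀ σ : Equiv.Perm (Fin (n + m)),
      Measure.map (fun ω => W ω ∘ σ) ℙ = Measure.map W ℙ)
    (hties : ∀ a b : Fin (n + m), a ≠ b → ℙ {ω | W ω a = W ω b} = 0)
    (β : ℝ) (hβ0 : 0 < β) (hβ1 : β ≤ 1)
    (k : ℕ) (hk1 : 1 ≤ k) (hkn : k ≤ n) :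
    ℙ {ω |
        orderStat (fun a : Fin n => W ω (Fin.castAdd m a)) ⟨k - 1, by omega⟩
          < orderStat (fun b : Fin m => W ω (Fin.natAdd n b))
              ⟨⌈(m : ℝ) * β⌉₊ - 1, by
                have h1 : ⌈(m : ℝ) * β⌉₊ ≤ m :=
                  Nat.ceil_le.mpr (mul_le_of_le_one_right (Nat.cast_nonneg m) hβ1)
                omega⟩}
      = ENNReal.ofReal
          (∑ j ∈ Finset.Icc k n,
            (Nat.choose (n - j + m - ⌈(m : ℝ) * β⌉₊) (n - j)
                * Nat.choose (j + ⌈(m : ℝ) * β⌉₊ - 1) j : ℝ)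
              / Nat.choose (n + m) m) := by
  have hr1 : 1 ≤ ⌈(m : ℝ) * β⌉₊ :=
    Nat.ceil_pos.mpr (mul_pos (by exact_mod_cast hm) hβ0)
  have hrm : ⌈(m : ℝ) * β⌉₊ ≤ m :=
    Nat.ceil_le.mpr (mul_le_of_le_one_right (Nat.cast_nonneg m) hβ1)
  exact main_prob hn hm hk1 hkn hr1 hrm ℙ W hW hexch hties (by omega) (by omega)
end

section
/- Let (L^c_1, …, L^c_n, L_1) be an exchangeable family of n+1 real-valued random variables with almost surely no ties, where n ≥ 1. Let L^c_{(1)} ≤ … ≤ L^c_{(n)} denote the order statistics of the first n variables. Then for every 1 ≤ k ≤ n, Pr[L_1 ≤ L^c_{(k)}] = k/(n+1). -/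
open MeasureTheory Finset

/-- Rank of coordinate `a` in the tuple `f` (number of coordinates `≤ f a`, including itself). -/
noncomputable def myRank {m : ℕ} (f : Fin m → ℝ) (a : Fin m) : ℕ :=
  (Finset.univ.filter fun i => f i ≤ f a).card

lemma myRank_strictBelow {m : ℕ} {f : Fin m → ℝ} {a b : Fin m} (hab : f a < f b) :
    myRank f a < myRank f b := by
  apply Finset.card_lt_card
  rw [Finset.ssubset_iff_of_subset]
  · exact ⟨b, by simp, by simp [not_le.mpr hab]⟩
  · intro i hi
    simp only [Finset.mem_filter, Finset.mem_univ, true_and] at *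
    exact hi.trans hab.le

lemma myRank_injective {m : ℕ} {f : Fin m → ℝ} (hf : Function.Injective f) :
    Function.Injective (myRank f) := by
  intro a b h
  by_contra hne
  rcases lt_trichotomy (f a) (f b) with hlt | heq | hgt
  · exact absurd h (Nat.ne_of_lt (myRank_strictBelow hlt))
  · exact hne (hf heq)
  · exact absurd h.symm (Nat.ne_of_lt (myRank_strictBelow hgt))

lemma myRank_mem_Icc {m : ℕ} (f : Fin m → ℝ) (a : Fin m) :
    myRank f a ∈ Finset.Icc 1 m := by
  simp only [Finset.mem_Icc]
  constructor
  · have : a ∈ Finset.univ.filter fun i => f i ≤ f a := by simp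
    exact Finset.card_pos.mpr ⟨a, this⟩
  · simpa [myRank] using (Finset.card_filter_le Finset.univ fun i => f i ≤ f a)

lemma myRank_image {m : ℕ} {f : Fin m → ℝ} (hf : Function.Injective f) :
    Finset.univ.image (myRank f) = Finset.Icc 1 m := by
  apply Finset.eq_of_subset_of_card_le
  · intro j hj
    simp only [Finset.mem_image] at hj
    obtain ⟨a, -, rfl⟩ := hj
    exact myRank_mem_Icc f a
  · rw [Finset.card_image_of_injective _ (myRank_injective hf)]
    simp

lemma myRank_count {m : ℕ} {f : Fin m → ℝ} (hf : Function.Injective f)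
    {k : ℕ} (hk : k ≤ m) :
    (Finset.univ.filter fun a => myRank f a ≤ k).card = k := by
  have h1 : ((Finset.univ.filter fun a => myRank f a ≤ k).image (myRank f)).card
      = (Finset.univ.filter fun a => myRank f a ≤ k).card :=
    Finset.card_image_of_injective _ (myRank_injective hf)
  have h2 := Finset.filter_image (f := myRank f) (s := Finset.univ) (p := fun j => j ≤ k)
  rw [← h1, ← h2, myRank_image hf]
  have : (Finset.Icc 1 m).filter (fun j => j ≤ k) = Finset.Icc 1 k := by
    ext j; simp only [Finset.mem_filter, Finset.mem_Icc]; omega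
  rw [this, Nat.card_Icc]
  omega

lemma myRank_comp {m : ℕ} (f : Fin m → ℝ) (σ : Equiv.Perm (Fin m)) (a : Fin m) :
    myRank (f ∘ σ) a = myRank f (σ a) := by
  unfold myRank
  have h2 := Finset.filter_image (f := σ) (s := Finset.univ) (p := fun i => f i ≤ f (σ a))
  rw [← Finset.card_image_of_injective
        (Finset.univ.filter fun i => (f ∘ σ) i ≤ (f ∘ σ) a) σ.injective]
  simp only [Function.comp_apply]
  rw [← h2, Finset.image_univ_equiv]

/-- The key deterministic lemma. -/
lemma rank_le_iff {n : ℕ} {f : Fin (n + 1) → ℝ} (hf : Function.Injective f)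
    {k : ℕ} (hk1 : 1 ≤ k) (hkn : k ≤ n) :
    (f (Fin.last n) ≤ orderStat (fun a : Fin n => f a.castSucc) ⟨k - 1, by have _ := hf; omega⟩)
      ↔ myRank f (Fin.last n) ≤ k := by
  set g : Fin n → ℝ := fun a => f a.castSucc with hg
  set x : ℝ := f (Fin.last n) with hx
  have hgx : ∀ i, g i ≠ x := by
    intro i h
    exact absurd (hf h) (Fin.ne_last_of_lt (Fin.castSucc_lt_last i))
  set h : Fin n → ℝ := g ∘ Tuple.sort g with hh
  have hmono : Monotone h := Tuple.monotone_sort g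
  -- step 1 : x ≤ h j ↔ card {i // h i ≤ x} ≤ j
  have step1 : ∀ j : Fin n, x ≤ h j ↔ Fintype.card { i // h i ≤ x } ≤ (j : ℕ) := by
    intro j
    rw [Fintype.card_subtype]
    have hiff := (Tuple.lt_card_le_iff_apply_le_of_monotone (f := h) (a := x) (j := j) hmono).not
    push_neg at hiff
    constructor
    · intro hxj
      exact hiff.mpr (lt_of_le_of_ne hxj fun e => hgx (Tuple.sort g j) e.symm)
    · intro hc
      exact (hiff.mp hc).le
  -- card of subtype = filter card over h = filter card over g
  have step2 : Fintype.card { i // h i ≤ x } = (Finset.univ.filter fun i => g i ≤ x).card := by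
    rw [Fintype.card_subtype]
    have h2 := Finset.filter_image (f := (Tuple.sort g : Fin n → Fin n)) (s := Finset.univ)
      (p := fun i => g i ≤ x)
    rw [← Finset.card_image_of_injective (Finset.univ.filter fun i => h i ≤ x)
          (Tuple.sort g).injective]
    simp only [hh, Function.comp_apply]
    rw [← h2, Finset.image_univ_equiv]
  -- myRank f last = filter card over g + 1
  have step3 : myRank f (Fin.last n) = (Finset.univ.filter fun i => g i ≤ x).card + 1 := by
    unfold myRank
    rw [Finset.card_filter, Fin.sum_univ_castSucc, Finset.card_filter]
    simp [← hx]
    rfl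
  rw [show orderStat g ⟨k - 1, by omega⟩ = h ⟨k - 1, by omega⟩ from rfl,
      step1, step2, step3]
  have : ((⟨k - 1, by omega⟩ : Fin n) : ℕ) = k - 1 := rfl
  rw [this]
  omega

lemma measurable_myRank {m : ℕ} (a : Fin m) :
    Measurable fun f : Fin m → ℝ => myRank f a := by
  unfold myRank
  simp_rw [Finset.card_filter]
  apply Finset.measurable_sum
  intro i _
  exact Measurable.ite (measurableSet_le (measurable_pi_apply i) (measurable_pi_apply a))
    measurable_const measurable_const

/-- Let `(L^c_1, …, L^c_n, L_1)` be an exchangeable family of `n+1` real random variables with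
almost surely no ties, `n ≥ 1`.  Then for every `1 ≤ k ≤ n`,
`Pr[L_1 ≤ L^c_(k)] = k/(n+1)`. -/
theorem prob_le_order_stat (n : ℕ) (hn : 1 ≤ n)
    {Ω : Type*} [MeasurableSpace Ω] (ℙ : Measure Ω) [IsProbabilityMeasure ℙ]
    (W : Ω → Fin (n + 1) → ℝ) (hW : Measurable W)
    (hexch : ∀ σ : Equiv.Perm (Fin (n + 1)),
      Measure.map (fun ω => W ω ∘ σ) ℙ = Measure.map W ℙ)
    (hties : ∀ a b : Fin (n + 1), a ≠ b → ℙ {ω | W ω a = W ω b} = 0)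
    (k : ℕ) (hk1 : 1 ≤ k) (hkn : k ≤ n) :
    ℙ {ω | W ω (Fin.last n)
          ≤ orderStat (fun a : Fin n => W ω a.castSucc) ⟨k - 1, by omega⟩}
      = (k : ENNReal) / ((n : ENNReal) + 1) := by
  classical
  set S : Fin (n + 1) → Set (Fin (n + 1) → ℝ) := fun a => {f | myRank f a ≤ k} with hS
  have hSmeas : ∀ a, MeasurableSet (S a) := fun a =>
    measurableSet_le (measurable_myRank a) measurable_const
  have hA : ∀ a, MeasurableSet (W ⁻¹' S a) := fun a => hW (hSmeas a)
  -- exchangeability : all ℙ (W ⁻¹' S a) are equal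
  have hconst : ∀ a, ℙ (W ⁻¹' S (Fin.last n)) = ℙ (W ⁻¹' S a) := by
    intro a
    set σ := Equiv.swap a (Fin.last n) with hσ
    have hσW : Measurable fun ω => W ω ∘ σ :=
      measurable_pi_iff.mpr fun i => (measurable_pi_apply (σ i)).comp hW
    have h1 := congrArg (fun μ : Measure _ => μ (S a)) (hexch σ)
    rw [Measure.map_apply hσW (hSmeas a), Measure.map_apply hW (hSmeas a)] at h1
    have h2 : (fun ω => W ω ∘ σ) ⁻¹' S a = W ⁻¹' S (σ a) := by
      ext ω
      simp only [Set.mem_preimage, hS, Set.mem_setOf_eq, myRank_comp]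
    rw [h2, show σ a = Fin.last n from Equiv.swap_apply_left a (Fin.last n)] at h1
    exact h1
  -- a.e. no ties
  have hae : ∀ᵐ ω ∂ℙ, Function.Injective (W ω) := by
    rw [ae_iff]
    refine measure_mono_null (t := ⋃ (a) (b) (_ : a ≠ b), {ω | W ω a = W ω b}) ?_
      (measure_iUnion_null fun a => measure_iUnion_null fun b =>
        measure_iUnion_null fun hne => hties a b hne)
    · intro ω hω
      simp only [Set.mem_setOf_eq] at hω
      rw [Function.not_injective_iff] at hω
      obtain ⟨a, b, hab, hne⟩ := hω
      exact Set.mem_iUnion.mpr ⟨a, Set.mem_iUnion.mpr ⟨b, Set.mem_iUnion.mpr ⟨hne, hab⟩⟩⟩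
  -- sum of probabilities is k
  have hsum : ∑ a : Fin (n + 1), ℙ (W ⁻¹' S a) = (k : ENNReal) := by
    have h1 : ∀ a : Fin (n + 1), ℙ (W ⁻¹' S a) = ∫⁻ ω, (W ⁻¹' S a).indicator 1 ω ∂ℙ :=
      fun a => (lintegral_indicator_one (hA a)).symm
    simp_rw [h1]
    rw [← lintegral_finset_sum _ fun a _ => measurable_one.indicator (hA a)]
    have h2 : ∫⁻ ω, ∑ a : Fin (n + 1), (W ⁻¹' S a).indicator 1 ω ∂ℙ
        = ∫⁻ _, (k : ENNReal) ∂ℙ := by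
      apply lintegral_congr_ae
      filter_upwards [hae] with ω hω
      have h3 : ∀ a : Fin (n + 1), (W ⁻¹' S a).indicator (1 : Ω → ENNReal) ω
          = if myRank (W ω) a ≤ k then 1 else 0 := by
        intro a; simp [Set.indicator_apply, hS]
      simp_rw [h3, Finset.sum_boole]
      rw [myRank_count hω (by omega)]
    rw [h2]
    simp
  -- conclude
  have hv := hsum
  rw [Finset.sum_congr rfl (fun a _ => (hconst a).symm), Finset.sum_const,
      Finset.card_univ, Fintype.card_fin] at hv
  have hEae : ℙ {ω | W ω (Fin.last n)
      ≤ orderStat (fun a : Fin n => W ω a.castSucc) ⟨k - 1, by omega⟩}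
      = ℙ (W ⁻¹' S (Fin.last n)) := by
    apply measure_congr
    rw [Filter.eventuallyEq_set]
    filter_upwards [hae] with ω hω
    simp only [Set.mem_setOf_eq, Set.mem_preimage, hS]
    exact rank_le_iff hω hk1 hkn
  rw [hEae]
  rw [ENNReal.eq_div_iff (by simp) (by simp)]
  rw [nsmul_eq_mul] at hv
  rw [← hv]
  push_cast
  ring
end

section
/- Let (L^c_1, …, L^c_n, L_1) be an exchangeable family of n+1 real-valued random variables with almost surely no ties, where n ≥ 1, and let α satisfy 1/(n+1) ≤ α < 1. Set k* = ⌈(n+1)(1−α)⌉, so that 1 ≤ k* ≤ n, and let L^c_{(k*)} denote the k*-th order statistic of the first n variables. Then α − 1/(n+1) ≤ Pr[L_1 > L^c_{(k*)}] ≤ α. -/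
open MeasureTheory
open scoped ENNReal

namespace LalAux

open Finset

noncomputable def rnk {N : ℕ} (f : Fin N → ℝ) (j : Fin N) : ℕ :=
  (univ.filter fun i => f i < f j).card

lemma card_filter_comp_perm {N : ℕ} (σ : Equiv.Perm (Fin N)) (p : Fin N → Prop) [DecidablePred p] :
    (univ.filter fun i => p (σ i)).card = (univ.filter p).card := by
  classical
  refine Finset.card_bij (fun i _ => σ i) ?_ ?_ ?_
  · intro a ha; simp only [mem_filter, mem_univ, true_and] at ha ⊢; exact ha
  · intro a _ b _ h; exact σ.injective h
  · intro b hb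
    exact ⟨σ.symm b, by simpa using (by simpa using hb : p b), by simp⟩

lemma rnk_comp_perm {N : ℕ} (σ : Equiv.Perm (Fin N)) (f : Fin N → ℝ) (j : Fin N) :
    rnk (f ∘ σ) j = rnk f (σ j) := by
  classical
  unfold rnk
  exact card_filter_comp_perm σ (fun i => f i < f (σ j))

lemma rnk_lt {N : ℕ} (f : Fin N → ℝ) (j : Fin N) : rnk f j < N := by
  classical
  have hsub : (univ.filter fun i => f i < f j) ⊆ univ.erase j := by
    intro i hi
    simp only [mem_filter, mem_univ, true_and] at hi
    refine Finset.mem_erase.mpr ⟨?_, mem_univ _⟩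
    rintro rfl; exact lt_irrefl _ hi
  calc rnk f j ≤ (univ.erase j).card := Finset.card_le_card hsub
    _ < N := by
        rw [Finset.card_erase_of_mem (mem_univ j)]
        simp only [Finset.card_univ, Fintype.card_fin]
        have : 0 < N := j.pos
        omega

lemma rnk_strictMono {N : ℕ} (f : Fin N → ℝ) {j j' : Fin N} (h : f j < f j') :
    rnk f j < rnk f j' := by
  classical
  apply Finset.card_lt_card
  constructor
  · intro i hi
    simp only [mem_filter, mem_univ, true_and] at hi ⊢
    exact hi.trans h
  · intro hsub
    have := hsub (by simp [h] : j ∈ univ.filter fun i => f i < f j')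
    simp at this

lemma rnk_injective {N : ℕ} {f : Fin N → ℝ} (hf : Function.Injective f) :
    Function.Injective (rnk f) := by
  intro a b hab
  by_contra hne
  rcases lt_or_gt_of_ne (fun h : f a = f b => hne (hf h)) with h | h
  · exact absurd hab (Nat.ne_of_lt (rnk_strictMono f h))
  · exact absurd hab.symm (Nat.ne_of_lt (rnk_strictMono f h))

lemma rnk_exists_unique {N : ℕ} {f : Fin N → ℝ} (hf : Function.Injective f) {r : ℕ}
    (hr : r < N) : ∃ j, rnk f j = r ∧ ∀ j', rnk f j' = r → j' = j := by
  classical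
  set g : Fin N → Fin N := fun j => ⟨rnk f j, rnk_lt f j⟩ with hg
  have hginj : Function.Injective g := by
    intro a b hab
    exact rnk_injective hf (by simpa [hg, Fin.ext_iff] using hab)
  have hgsurj := Finite.surjective_of_injective hginj
  obtain ⟨j, hj⟩ := hgsurj ⟨r, hr⟩
  have hjr : rnk f j = r := by simpa [hg, Fin.ext_iff] using hj
  exact ⟨j, hjr, fun j' hj' => rnk_injective hf (hj'.trans hjr.symm)⟩

lemma measurable_rnk {N : ℕ} (j : Fin N) : Measurable fun f : Fin N → ℝ => rnk f j := by
  classical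
  unfold rnk
  simp_rw [Finset.card_filter]
  exact Finset.measurable_sum _ fun i _ =>
    Measurable.ite (measurableSet_lt (measurable_pi_apply i) (measurable_pi_apply j))
      measurable_const measurable_const

lemma measurableSet_rnk {N : ℕ} (j : Fin N) (r : ℕ) :
    MeasurableSet {f : Fin N → ℝ | rnk f j = r} :=
  measurable_rnk j (measurableSet_singleton r)

lemma orderStat_lt_iff {n : ℕ} (f : Fin n → ℝ) (k : ℕ) (hk1 : 1 ≤ k) (t : ℝ) (h : k - 1 < n) :
    orderStat f ⟨k - 1, h⟩ < t ↔ k ≤ (univ.filter fun a => f a < t).card := by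
  classical
  have hmono := Tuple.monotone_sort f
  have hcard : (univ.filter fun a => f a < t).card
      = (univ.filter fun i => (f ∘ Tuple.sort f) i < t).card :=
    (card_filter_comp_perm (Tuple.sort f) (fun a => f a < t)).symm
  rw [hcard]
  set g := f ∘ Tuple.sort f with hg
  have horder : orderStat f ⟨k-1, h⟩ = g ⟨k-1, h⟩ := rfl
  rw [horder]
  constructor
  · intro hlt
    have hsub : Finset.Iic (⟨k-1, h⟩ : Fin n) ⊆ univ.filter fun i => g i < t := by
      intro i hi
      simp only [mem_filter, mem_univ, true_and]
      exact lt_of_le_of_lt (hmono (by simpa using hi)) hlt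
    have hc := Finset.card_le_card hsub
    rw [Fin.card_Iic] at hc
    simp only at hc
    omega
  · intro hle
    by_contra hnlt
    push_neg at hnlt
    have hsub : (univ.filter fun i => g i < t) ⊆ Finset.Iio (⟨k-1, h⟩ : Fin n) := by
      intro i hi
      simp only [mem_filter, mem_univ, true_and] at hi
      simp only [Finset.mem_Iio]
      by_contra hge
      push_neg at hge
      exact absurd (hmono hge) (not_le.mpr (lt_of_lt_of_le hi hnlt))
    have hc := Finset.card_le_card hsub
    rw [Fin.card_Iio] at hc
    simp only at hc
    omega

lemma card_filter_castSucc {n : ℕ} (g : Fin (n+1) → ℝ) (t : ℝ) (ht : ¬ g (Fin.last n) < t) :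
    (univ.filter fun a : Fin n => g a.castSucc < t).card
      = (univ.filter fun i : Fin (n+1) => g i < t).card := by
  classical
  refine Finset.card_bij (fun a _ => a.castSucc) ?_ ?_ ?_
  · intro a ha; simp only [mem_filter, mem_univ, true_and] at ha ⊢; exact ha
  · intro a _ b _ hab; exact Fin.castSucc_injective _ hab
  · intro i hi
    simp only [mem_filter, mem_univ, true_and] at hi
    have hne : i ≠ Fin.last n := by rintro rfl; exact ht hi
    obtain ⟨a, rfl⟩ := Fin.exists_castSucc_eq.mpr hne
    exact ⟨a, by simp [hi], rfl⟩

end LalAux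

/-- Let `(L^c_1, …, L^c_n, L_1)` be an exchangeable family of `n+1` real random variables with
almost surely no ties, `n ≥ 1`, and let `1/(n+1) ≤ α < 1`.  With `k* = ⌈(n+1)(1−α)⌉` (so that
`1 ≤ k* ≤ n`), we have `α − 1/(n+1) ≤ Pr[L_1 > L^c_(k*)] ≤ α`. -/
theorem lal_m_one_tight (n : ℕ) (hn : 1 ≤ n)
    {Ω : Type*} [MeasurableSpace Ω] (ℙ : Measure Ω) [IsProbabilityMeasure ℙ]
    (W : Ω → Fin (n + 1) → ℝ) (hW : Measurable W)
    (hexch : ∀ σ : Equiv.Perm (Fin (n + 1)),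
      Measure.map (fun ω => W ω ∘ σ) ℙ = Measure.map W ℙ)
    (hties : ∀ a b : Fin (n + 1), a ≠ b → ℙ {ω | W ω a = W ω b} = 0)
    (α : ℝ) (hα1 : 1 / ((n : ℝ) + 1) ≤ α) (hα2 : α < 1) :
    ENNReal.ofReal (α - 1 / ((n : ℝ) + 1))
        ≤ ℙ {ω | orderStat (fun a : Fin n => W ω a.castSucc)
              ⟨⌈((n : ℝ) + 1) * (1 - α)⌉₊ - 1, by
                have hpos : (0 : ℝ) < (n : ℝ) + 1 := by positivity
                have h1 : 1 ≤ α * ((n : ℝ) + 1) := (div_le_iff₀ hpos).mp hα1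
                have h2 : ((n : ℝ) + 1) * (1 - α) ≤ (n : ℝ) := by nlinarith
                have h3 : ⌈((n : ℝ) + 1) * (1 - α)⌉₊ ≤ n := Nat.ceil_le.mpr h2
                omega⟩
            < W ω (Fin.last n)}
      ∧ ℙ {ω | orderStat (fun a : Fin n => W ω a.castSucc)
              ⟨⌈((n : ℝ) + 1) * (1 - α)⌉₊ - 1, by
                have hpos : (0 : ℝ) < (n : ℝ) + 1 := by positivity
                have h1 : 1 ≤ α * ((n : ℝ) + 1) := (div_le_iff₀ hpos).mp hα1
                have h2 : ((n : ℝ) + 1) * (1 - α) ≤ (n : ℝ) := by nlinarith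
                have h3 : ⌈((n : ℝ) + 1) * (1 - α)⌉₊ ≤ n := Nat.ceil_le.mpr h2
                omega⟩
            < W ω (Fin.last n)}
          ≤ ENNReal.ofReal α := by
  classical
  have hpos : (0 : ℝ) < (n : ℝ) + 1 := by positivity
  have h1 : 1 ≤ α * ((n : ℝ) + 1) := (div_le_iff₀ hpos).mp hα1
  set k := ⌈((n : ℝ) + 1) * (1 - α)⌉₊ with hkdef
  have hk_le : k ≤ n := Nat.ceil_le.mpr (by nlinarith)
  have hk_ge : 1 ≤ k := Nat.one_le_ceil_iff.mpr (by nlinarith)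
  have hklt : k - 1 < n := by omega
  -- the rank events
  set A : ℕ → Set Ω := fun r => W ⁻¹' {f | LalAux.rnk f (Fin.last n) = r} with hA
  have hAmeas : ∀ r, MeasurableSet (A r) := fun r => hW (LalAux.measurableSet_rnk _ r)
  -- exchangeability: the rank of coordinate j has the same law as the rank of the last one
  have hswap : ∀ (j : Fin (n + 1)) (r : ℕ),
      ℙ (W ⁻¹' {f | LalAux.rnk f j = r}) = ℙ (A r) := by
    intro j r
    set σ := Equiv.swap (Fin.last n) j with hσ
    have hWσ : Measurable fun ω => W ω ∘ σ :=
      measurable_pi_lambda _ fun i => (measurable_pi_apply (σ i)).comp hW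
    have hS := LalAux.measurableSet_rnk (N := n + 1) (Fin.last n) r
    have e1 : (fun ω => W ω ∘ σ) ⁻¹' {f | LalAux.rnk f (Fin.last n) = r}
        = W ⁻¹' {f | LalAux.rnk f j = r} := by
      ext ω
      simp only [Set.mem_preimage, Set.mem_setOf_eq]
      rw [LalAux.rnk_comp_perm]
      simp [hσ, Equiv.swap_apply_left]
    calc ℙ (W ⁻¹' {f | LalAux.rnk f j = r})
        = Measure.map (fun ω => W ω ∘ σ) ℙ {f | LalAux.rnk f (Fin.last n) = r} := by
          rw [Measure.map_apply hWσ hS, e1]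
      _ = Measure.map W ℙ {f | LalAux.rnk f (Fin.last n) = r} := by rw [hexch]
      _ = ℙ (A r) := by rw [Measure.map_apply hW hS, hA]
  -- the ties set is null
  set T : Set Ω := ⋃ (a : Fin (n + 1)) (b : Fin (n + 1)) (_ : a ≠ b), {ω | W ω a = W ω b}
    with hT
  have hTmeas : MeasurableSet T := by
    refine MeasurableSet.iUnion fun a => MeasurableSet.iUnion fun b =>
      MeasurableSet.iUnion fun _ => ?_
    exact measurableSet_eq_fun ((measurable_pi_apply a).comp hW) ((measurable_pi_apply b).comp hW)
  have hTnull : ℙ T = 0 :=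
    measure_iUnion_null fun a => measure_iUnion_null fun b =>
      measure_iUnion_null fun hab => hties a b hab
  have hinj : ∀ ω, ω ∉ T → Function.Injective (W ω) := by
    intro ω hω a b hab
    by_contra hne
    exact hω (Set.mem_iUnion.mpr ⟨a, Set.mem_iUnion.mpr ⟨b, Set.mem_iUnion.mpr ⟨hne, hab⟩⟩⟩)
  -- the rank of the last coordinate is uniform
  have huni : ∀ r : ℕ, r < n + 1 → ℙ (A r) = ((n : ℝ≥0∞) + 1)⁻¹ := by
    intro r hr
    set B : Fin (n + 1) → Set Ω := fun j => W ⁻¹' {f | LalAux.rnk f j = r} ∩ Tᶜ with hB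
    have hBmeas : ∀ j, MeasurableSet (B j) :=
      fun j => (hW (LalAux.measurableSet_rnk j r)).inter hTmeas.compl
    have hdisj : Pairwise (Function.onFun Disjoint B) := by
      intro i j hij
      refine Set.disjoint_left.mpr ?_
      rintro ω ⟨hωi, hωT⟩ ⟨hωj, -⟩
      exact hij (LalAux.rnk_injective (hinj ω hωT)
        ((hωi : LalAux.rnk (W ω) i = r).trans (hωj : LalAux.rnk (W ω) j = r).symm))
    have hBunion : ⋃ j, B j = Tᶜ := by
      apply Set.eq_of_subset_of_subset
      · exact Set.iUnion_subset fun j => Set.inter_subset_right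
      · intro ω hω
        obtain ⟨j, hj, -⟩ := LalAux.rnk_exists_unique (hinj ω hω) hr
        exact Set.mem_iUnion.mpr ⟨j, hj, hω⟩
    have hsum : ∑ j : Fin (n + 1), ℙ (B j) = 1 := by
      rw [← tsum_fintype (L := .unconditional _), ← measure_iUnion hdisj hBmeas, hBunion,
        measure_compl hTmeas (measure_ne_top _ _), hTnull, measure_univ]
      simp
    have hBval : ∀ j, ℙ (B j) = ℙ (A r) := by
      intro j
      rw [← hswap j r]
      refine le_antisymm (measure_mono Set.inter_subset_left) ?_
      calc ℙ (W ⁻¹' {f | LalAux.rnk f j = r}) ≤ ℙ (B j ∪ T) := by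
            apply measure_mono
            intro ω hω
            by_cases h : ω ∈ T
            · exact Or.inr h
            · exact Or.inl ⟨hω, h⟩
        _ ≤ ℙ (B j) + ℙ T := measure_union_le _ _
        _ = ℙ (B j) := by rw [hTnull, add_zero]
    have hc : ((n + 1 : ℕ) : ℝ≥0∞) * ℙ (A r) = 1 := by
      rw [← hsum]
      simp only [hBval, Finset.sum_const, Finset.card_univ, Fintype.card_fin, nsmul_eq_mul]
    have hAr : ℙ (A r) = (((n + 1 : ℕ)) : ℝ≥0∞)⁻¹ := by
      rw [← one_mul (ℙ (A r)), ← ENNReal.inv_mul_cancel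
        (by simp : ((n + 1 : ℕ) : ℝ≥0∞) ≠ 0) (by simp : ((n + 1 : ℕ) : ℝ≥0∞) ≠ ⊤),
        mul_assoc, hc, mul_one]
    rw [hAr]
    congr 1
    push_cast
    ring
  -- rewriting the event
  have hrank : ∀ ω, (orderStat (fun a : Fin n => W ω a.castSucc) ⟨k - 1, hklt⟩
      < W ω (Fin.last n)) ↔ k ≤ LalAux.rnk (W ω) (Fin.last n) := by
    intro ω
    rw [LalAux.orderStat_lt_iff _ k hk_ge _ hklt]
    unfold LalAux.rnk
    rw [LalAux.card_filter_castSucc (W ω) (W ω (Fin.last n)) (lt_irrefl _)]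
  have hE : {ω | orderStat (fun a : Fin n => W ω a.castSucc) ⟨k - 1, hklt⟩ < W ω (Fin.last n)}
      = ⋃ r ∈ Finset.Icc k n, A r := by
    ext ω
    simp only [Set.mem_setOf_eq, Set.mem_iUnion, exists_prop, hA, Set.mem_preimage, hrank ω]
    constructor
    · intro h
      exact ⟨LalAux.rnk (W ω) (Fin.last n),
        Finset.mem_Icc.mpr ⟨h, by have := LalAux.rnk_lt (W ω) (Fin.last n); omega⟩, rfl⟩
    · rintro ⟨r, hr, hrw⟩
      rw [hrw]
      exact (Finset.mem_Icc.mp hr).1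
  have hPE : ℙ {ω | orderStat (fun a : Fin n => W ω a.castSucc) ⟨k - 1, hklt⟩
        < W ω (Fin.last n)}
      = ((n + 1 - k : ℕ) : ℝ≥0∞) * ((n : ℝ≥0∞) + 1)⁻¹ := by
    rw [hE, measure_biUnion_finset ?_ (fun r _ => hAmeas r)]
    · rw [Finset.sum_congr rfl fun r hr => huni r (by have := Finset.mem_Icc.mp hr; omega),
        Finset.sum_const, Nat.card_Icc, nsmul_eq_mul]
    · intro r hr r' hr' hne
      refine Set.disjoint_left.mpr ?_
      intro ω hωr hωr'
      exact hne ((hωr : LalAux.rnk (W ω) (Fin.last n) = r).symm.trans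
        (hωr' : LalAux.rnk (W ω) (Fin.last n) = r'))
  -- arithmetic
  have hval : ℙ {ω | orderStat (fun a : Fin n => W ω a.castSucc) ⟨k - 1, hklt⟩
        < W ω (Fin.last n)}
      = ENNReal.ofReal (((n + 1 - k : ℕ) : ℝ) / ((n : ℝ) + 1)) := by
    rw [hPE, ENNReal.ofReal_div_of_pos hpos, ENNReal.ofReal_natCast, div_eq_mul_inv]
    congr 1
    rw [show ((n : ℝ) + 1) = ((n + 1 : ℕ) : ℝ) by push_cast; ring, ENNReal.ofReal_natCast]
    push_cast
    ring
  have hceil1 : ((n : ℝ) + 1) * (1 - α) ≤ (k : ℝ) := Nat.le_ceil _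
  have hceil2 : (k : ℝ) < ((n : ℝ) + 1) * (1 - α) + 1 :=
    Nat.ceil_lt_add_one (by nlinarith)
  have hcast : ((n + 1 - k : ℕ) : ℝ) = (n : ℝ) + 1 - (k : ℝ) := by
    rw [Nat.cast_sub (by omega)]
    push_cast
    ring
  refine ⟨le_trans ?_ hval.symm.le, le_trans hval.le ?_⟩
  · apply ENNReal.ofReal_le_ofReal
    have hinv : (1 / ((n : ℝ) + 1)) * ((n : ℝ) + 1) = 1 := by field_simp
    rw [hcast, le_div_iff₀ hpos]
    nlinarith [hinv]
  · apply ENNReal.ofReal_le_ofReal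
    rw [hcast, div_le_iff₀ hpos]
    nlinarith
end

section
/- Fix integers n ≥ 1 and 0 ≤ j ≤ n, and β ∈ (0,1). Then, as m → ∞ over positive integers, C(n−j+m−⌈mβ⌉, n−j) · C(j+⌈mβ⌉−1, j) / C(n+m, m) converges to C(n, j) · β^j · (1−β)^{n−j}. -/
open Filter Finset

private lemma choose_cast_prod (a s : ℕ) :
    ((a + s).choose s : ℝ) = (∏ i ∈ Finset.range s, ((a : ℝ) + i + 1)) / (s.factorial : ℝ) := by
  induction s with
  | zero => simp
  | succ s ih =>
    have h := Nat.add_one_mul_choose_eq (a + s) s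
    have h' : ((a + s : ℝ) + 1) * ((a + s).choose s : ℝ)
        = ((a + (s + 1)).choose (s + 1) : ℝ) * ((s : ℝ) + 1) := by
      exact_mod_cast congrArg (Nat.cast (R := ℝ)) h
    rw [ih] at h'
    rw [Finset.prod_range_succ, Nat.factorial_succ]
    have hs : ((s.factorial : ℝ)) ≠ 0 := by exact_mod_cast (Nat.factorial_ne_zero s)
    have hs1 : ((s : ℝ) + 1) ≠ 0 := by positivity
    push_cast
    field_simp at h' ⊢
    nlinarith [h']

private lemma ceil_div_tendsto (β : ℝ) (hβ0 : 0 < β) (hβ1 : β < 1) :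
    Tendsto (fun m : ℕ => (⌈(m : ℝ) * β⌉₊ : ℝ) / m) atTop (nhds β) := by
  have hupper : Tendsto (fun m : ℕ => β + 1 / (m : ℝ)) atTop (nhds β) := by
    simpa using (tendsto_const_nhds (x := β)).add (tendsto_one_div_atTop_nhds_zero_nat (𝕜 := ℝ))
  refine tendsto_of_tendsto_of_tendsto_of_le_of_le' tendsto_const_nhds hupper ?_ ?_
  · filter_upwards [eventually_ge_atTop 1] with m hm
    have hm0 : (0 : ℝ) < m := by exact_mod_cast hm
    rw [le_div_iff₀ hm0]
    calc β * m = (m : ℝ) * β := by ring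
    _ ≤ ⌈(m : ℝ) * β⌉₊ := Nat.le_ceil _
  · filter_upwards [eventually_ge_atTop 1] with m hm
    have hm0 : (0 : ℝ) < m := by exact_mod_cast hm
    rw [div_le_iff₀ hm0]
    have hlt : (⌈(m : ℝ) * β⌉₊ : ℝ) < (m : ℝ) * β + 1 :=
      Nat.ceil_lt_add_one (by positivity)
    have hq : (β + 1 / (m : ℝ)) * m = (m : ℝ) * β + 1 := by
      field_simp
    rw [hq]
    linarith

set_option maxHeartbeats 1600000 in
/-- Fix `n ≥ 1`, `0 ≤ j ≤ n` and `β ∈ (0,1)`.  As `m → ∞` over positive integers,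
`C(n−j+m−⌈mβ⌉, n−j) · C(j+⌈mβ⌉−1, j) / C(n+m, m)` converges to `C(n, j)·β^j·(1−β)^{n−j}`. -/
theorem choose_ratio_tendsto_binomial (n j : ℕ) (hn : 1 ≤ n) (hj : j ≤ n)
    (β : ℝ) (hβ0 : 0 < β) (hβ1 : β < 1) :
    Tendsto
      (fun m : ℕ =>
        (Nat.choose (n - j + m - ⌈(m : ℝ) * β⌉₊) (n - j)
            * Nat.choose (j + ⌈(m : ℝ) * β⌉₊ - 1) j : ℝ)
          / Nat.choose (n + m) m)
      atTop
      (nhds ((Nat.choose n j : ℝ) * β ^ j * (1 - β) ^ (n - j))) := by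
  set K : ℕ → ℕ := fun m => ⌈(m : ℝ) * β⌉₊ with hK
  have hkm : ∀ m : ℕ, K m ≤ m := by
    intro m
    apply Nat.ceil_le.2
    nlinarith [Nat.cast_nonneg (α := ℝ) m]
  have hk1 : ∀ m : ℕ, 1 ≤ m → 1 ≤ K m := by
    intro m hm
    apply Nat.one_le_ceil_iff.2
    have : (0:ℝ) < m := by exact_mod_cast hm
    positivity
  have hkd : Tendsto (fun m : ℕ => (K m : ℝ) / m) atTop (nhds β) :=
    ceil_div_tendsto β hβ0 hβ1
  have hminv : Tendsto (fun m : ℕ => 1 / (m : ℝ)) atTop (nhds 0) :=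
    tendsto_one_div_atTop_nhds_zero_nat
  -- generic factor limits
  have h1 : ∀ a b : ℝ, 0 < b →
      Tendsto (fun m : ℕ => ((m : ℝ) - K m + a) / ((m : ℝ) + b)) atTop (nhds (1 - β)) := by
    intro a b hb
    have hnum : Tendsto (fun m : ℕ => 1 - (K m : ℝ) / m + a * (1 / m)) atTop
        (nhds (1 - β + a * 0)) := (tendsto_const_nhds.sub hkd).add (tendsto_const_nhds.mul hminv)
    have hden : Tendsto (fun m : ℕ => 1 + b * (1 / m)) atTop (nhds (1 + b * 0)) :=
      tendsto_const_nhds.add (tendsto_const_nhds.mul hminv)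
    have := hnum.div hden (by norm_num)
    simp only [mul_zero, add_zero, div_one] at this
    refine Tendsto.congr' ?_ this
    filter_upwards [eventually_ge_atTop 1] with m hm
    have hm0 : (m : ℝ) ≠ 0 := by
      have : (0:ℝ) < m := by exact_mod_cast hm
      exact ne_of_gt this
    have hmb : (m : ℝ) + b ≠ 0 := by
      have : (0:ℝ) < m := by exact_mod_cast hm
      positivity
    simp only [Pi.div_apply]
    field_simp
  have h2 : ∀ a b : ℝ, 0 < b →
      Tendsto (fun m : ℕ => ((K m : ℝ) + a) / ((m : ℝ) + b)) atTop (nhds β) := by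
    intro a b hb
    have hnum : Tendsto (fun m : ℕ => (K m : ℝ) / m + a * (1 / m)) atTop
        (nhds (β + a * 0)) := hkd.add (tendsto_const_nhds.mul hminv)
    have hden : Tendsto (fun m : ℕ => 1 + b * (1 / m)) atTop (nhds (1 + b * 0)) :=
      tendsto_const_nhds.add (tendsto_const_nhds.mul hminv)
    have := hnum.div hden (by norm_num)
    simp only [mul_zero, add_zero, div_one] at this
    refine Tendsto.congr' ?_ this
    filter_upwards [eventually_ge_atTop 1] with m hm
    have hm0 : (m : ℝ) ≠ 0 := by
      have : (0:ℝ) < m := by exact_mod_cast hm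
      exact ne_of_gt this
    have hmb : (m : ℝ) + b ≠ 0 := by
      have : (0:ℝ) < m := by exact_mod_cast hm
      positivity
    simp only [Pi.div_apply]
    field_simp
  have hprod1 : Tendsto
      (fun m : ℕ => ∏ i ∈ Finset.range (n - j),
        ((m : ℝ) - K m + i + 1) / ((m : ℝ) + i + 1)) atTop (nhds ((1 - β) ^ (n - j))) := by
    have := tendsto_finset_prod (f := fun (i : ℕ) (m : ℕ) =>
        ((m : ℝ) - K m + i + 1) / ((m : ℝ) + i + 1)) (x := atTop)
        (a := fun _ => (1 - β)) (Finset.range (n - j))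
      (fun i _ => by simpa [add_assoc] using h1 (i + 1) (i + 1) (by positivity))
    simpa using this
  have hprod2 : Tendsto
      (fun m : ℕ => ∏ i ∈ Finset.range j,
        ((K m : ℝ) + i) / ((m : ℝ) + ((n - j : ℕ) : ℝ) + i + 1)) atTop (nhds (β ^ j)) := by
    have := tendsto_finset_prod (f := fun (i : ℕ) (m : ℕ) =>
        ((K m : ℝ) + i) / ((m : ℝ) + ((n - j : ℕ) : ℝ) + i + 1)) (x := atTop)
        (a := fun _ => β) (Finset.range j)
      (fun i _ => by simpa [add_assoc] using h2 i (((n - j : ℕ) : ℝ) + i + 1) (by positivity))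
    simpa using this
  have hmain := (tendsto_const_nhds (x := ((n.choose j : ℝ))).mul hprod2).mul hprod1
  refine Tendsto.congr' ?_ hmain
  filter_upwards [eventually_ge_atTop 1] with m hm
  have h1m : K m ≤ m := hkm m
  have h2m : 1 ≤ K m := hk1 m hm
  have e1 : n - j + m - K m = (m - K m) + (n - j) := by omega
  have e2 : j + K m - 1 = (K m - 1) + j := by omega
  have e3 : (n + m).choose m = (m + n).choose n := by
    rw [add_comm m n]
    have := Nat.choose_symm (Nat.le_add_right n m)
    simpa using this
  rw [e1, e2, e3, choose_cast_prod, choose_cast_prod, choose_cast_prod]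
  have eP1 : ∏ i ∈ Finset.range (n - j), (((m - K m : ℕ) : ℝ) + i + 1)
      = ∏ i ∈ Finset.range (n - j), ((m : ℝ) - K m + i + 1) :=
    Finset.prod_congr rfl (fun i _ => by rw [Nat.cast_sub h1m])
  have eP2 : ∏ i ∈ Finset.range j, (((K m - 1 : ℕ) : ℝ) + i + 1)
      = ∏ i ∈ Finset.range j, ((K m : ℝ) + i) :=
    Finset.prod_congr rfl (fun i _ => by rw [Nat.cast_sub h2m]; push_cast; ring)
  have eQ : ∏ i ∈ Finset.range n, ((m : ℝ) + i + 1)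
      = (∏ i ∈ Finset.range (n - j), ((m : ℝ) + i + 1))
        * ∏ i ∈ Finset.range j, ((m : ℝ) + ((n - j : ℕ) : ℝ) + i + 1) := by
    have h := Finset.prod_range_add (fun i => ((m : ℝ) + i + 1)) (n - j) j
    rw [show n - j + j = n by omega] at h
    rw [h]
    refine congrArg _ (Finset.prod_congr rfl fun i _ => ?_)
    push_cast
    ring
  rw [eP1, eP2, eQ, Finset.prod_div_distrib, Finset.prod_div_distrib,
    Nat.cast_choose ℝ hj]
  have hQ1 : (0:ℝ) < ∏ i ∈ Finset.range (n - j), ((m : ℝ) + i + 1) :=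
    Finset.prod_pos fun i _ => by positivity
  have hQ2 : (0:ℝ) < ∏ i ∈ Finset.range j, ((m : ℝ) + ((n - j : ℕ) : ℝ) + i + 1) :=
    Finset.prod_pos fun i _ => by positivity
  have hf1 : ((n - j).factorial : ℝ) ≠ 0 := by exact_mod_cast (Nat.factorial_ne_zero _)
  have hf2 : ((j).factorial : ℝ) ≠ 0 := by exact_mod_cast (Nat.factorial_ne_zero _)
  have hf3 : ((n).factorial : ℝ) ≠ 0 := by exact_mod_cast (Nat.factorial_ne_zero _)
  field_simp
end
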